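/- arXiv:2603.04278 — 6 statements merged into one kernel-verified Lean document; each statement's English description precedes it below -/
import Mathlib

section
/- Assume p_0 > 0 and p_0 + p_1 < 1. Define coefficients a_0 = 1, a_1 = (1 − p_0 − p_1)/p_0, and recursively a_n = (a_{n−1} − ∑_{j=1}^{n} p_j a_{n−j})/p_0 for 2 ≤ n ≤ C−1. Then the vector π = (π_0, …, π_{C−1}) with π_n = a_n / (∑_{m=0}^{C−1} a_m) is a stationary probability distribution of the transition matrix P (i.e. π_n ≥ 0 for all n, ∑_{n=0}^{C−1} π_n = 1 and π P = π), and it is the unique probability row vector fixed by P. -/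
open scoped BigOperators

/-- Transition matrix of the finite-capacity Moran storage chain on states `{0, …, C-1}`:
`P 0 0 = p 0 + p 1`, `P 0 j = p (j+1)` for `1 ≤ j ≤ C-2`, `P i j = p (j-i+1)` for
`1 ≤ i ≤ C-1` and `i-1 ≤ j ≤ C-2`, `P i j = 0` for `j < i-1`, and
`P i (C-1) = h (C-i)` where `h k = ∑_{j ≥ k} p j`. -/
noncomputable def moranP (C : ℕ) (p : ℕ → ℝ) : Matrix (Fin C) (Fin C) ℝ :=
  Matrix.of fun i j =>
    if (j : ℕ) = C - 1 then ∑' k : ℕ, p (C - (i : ℕ) + k)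
    else if (i : ℕ) = 0 ∧ (j : ℕ) = 0 then p 0 + p 1
    else if (i : ℕ) ≤ (j : ℕ) + 1 then p ((j : ℕ) + 1 - (i : ℕ))
    else 0

open Finset


/-- nat-indexed entry function for the non-last columns of `moranP`. -/
noncomputable def moranE (p : ℕ → ℝ) (i j : ℕ) : ℝ :=
  if i = 0 ∧ j = 0 then p 0 + p 1 else if i ≤ j + 1 then p (j + 1 - i) else 0

lemma moranP_apply_ne (C : ℕ) (p : ℕ → ℝ) (i j : Fin C) (hj : (j : ℕ) ≠ C - 1) :
    moranP C p i j = moranE p i j := by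
  simp [moranP, moranE, hj]

lemma moranP_apply_last (C : ℕ) (p : ℕ → ℝ) (i j : Fin C) (hj : (j : ℕ) = C - 1) :
    moranP C p i j = ∑' k : ℕ, p (C - (i : ℕ) + k) := by
  simp [moranP, hj]

/-- convolution reindexing -/
lemma conv_swap (f g : ℕ → ℝ) (n : ℕ) :
    ∑ m ∈ Icc 1 (n + 1), g m * f (n + 1 - m) = ∑ k ∈ range (n + 1), f k * g (n + 1 - k) := by
  rw [← Finset.Ico_add_one_right_eq_Icc, Finset.sum_Ico_eq_sum_range]
  rw [← Finset.sum_range_reflect (fun k => f k * g (n + 1 - k)) (n + 1)]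
  refine Finset.sum_congr (by norm_num) fun i hi => ?_
  rw [Finset.mem_range] at hi
  have h1 : 1 + i = i + 1 := by omega
  have h2 : n + 1 - (i + 1) = n + 1 - 1 - i := by omega
  have h3 : n + 1 - (n + 1 - 1 - i) = i + 1 := by omega
  rw [h1, h2, h3, mul_comm]

/-- column sum for non-last columns -/
lemma colsum (C : ℕ) (p b : ℕ → ℝ) (j : ℕ) (hj : j + 1 < C) :
    ∑ i ∈ range C, b i * moranE p i j
      = (if j = 0 then b 0 * p 0 else 0) +
        (b (j + 1) * p 0 + ∑ m ∈ Icc 1 (j + 1), p m * b (j + 1 - m)) := by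
  have h2 : j + 2 ≤ C := by omega
  rw [← Finset.sum_range_add_sum_Ico _ h2]
  have hzero : ∑ i ∈ Ico (j + 2) C, b i * moranE p i j = 0 := by
    refine Finset.sum_eq_zero fun i hi => ?_
    rw [Finset.mem_Ico] at hi
    have : moranE p i j = 0 := by
      unfold moranE
      rw [if_neg (by omega), if_neg (by omega)]
    rw [this, mul_zero]
  rw [hzero, add_zero]
  rw [conv_swap b p j]
  rcases Nat.eq_zero_or_pos j with hj0 | hj0
  · subst hj0
    simp [Finset.sum_range_succ, moranE]
    ring
  · have hE : ∀ i ∈ range (j + 2), b i * moranE p i j = b i * p (j + 1 - i) := by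
      intro i hi
      rw [Finset.mem_range] at hi
      unfold moranE
      rw [if_neg (by omega), if_pos (by omega)]
    rw [Finset.sum_congr rfl hE, if_neg (by omega), zero_add]
    rw [Finset.sum_range_succ (fun x => b x * p (j + 1 - x)) (j + 1)]
    simp only [Nat.sub_self]
    ring

/-- row sums of the nat entry function over the first `C-1` columns. -/
lemma rowsumE (C : ℕ) (hC : 2 ≤ C) (p : ℕ → ℝ) (i : ℕ) (hi : i < C) :
    ∑ j ∈ range (C - 1), moranE p i j = ∑ k ∈ range (C - i), p k := by
  rcases Nat.eq_zero_or_pos i with h0 | h0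
  · subst h0
    have hc1 : C - 1 = (C - 2) + 1 := by omega
    have hc2 : C - 0 = ((C - 2) + 1) + 1 := by omega
    rw [hc1, hc2]
    rw [Finset.sum_range_succ' (fun j => moranE p 0 j) (C - 2)]
    rw [Finset.sum_range_succ' p ((C - 2) + 1)]
    rw [Finset.sum_range_succ' (fun k => p (k + 1)) (C - 2)]
    have h00 : moranE p 0 0 = p 0 + p 1 := by simp [moranE]
    have hterm : ∀ j ∈ range (C - 2), moranE p 0 (j + 1) = p (j + 1 + 1) := by
      intro j hj
      unfold moranE
      rw [if_neg (by omega), if_pos (by omega)]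
      norm_num
    rw [Finset.sum_congr rfl hterm, h00]
    ring
  · -- i ≥ 1 : entries vanish for j < i - 1
    have hsub : Ico (i - 1) (C - 1) ⊆ range (C - 1) := by
      intro x hx
      rw [Finset.mem_Ico] at hx
      rw [Finset.mem_range]
      exact hx.2
    rw [← Finset.sum_subset hsub (by
      intro x hx hx'
      rw [Finset.mem_range] at hx
      rw [Finset.mem_Ico] at hx'
      have hxlt : x < i - 1 := by omega
      unfold moranE
      rw [if_neg (by omega), if_neg (by omega)]
      )]
    rw [Finset.sum_Ico_eq_sum_range]
    have hcard : C - 1 - (i - 1) = C - i := by omega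
    rw [hcard]
    refine Finset.sum_congr rfl fun k hk => ?_
    unfold moranE
    rw [if_neg (by omega), if_pos (by omega)]
    congr 1
    omega
/-- tail sums of p -/
noncomputable def tailSum (p : ℕ → ℝ) (m : ℕ) : ℝ := 1 - ∑ i ∈ Finset.range m, p i

lemma tailSum_nonneg (p : ℕ → ℝ) (hpnn : ∀ j, 0 ≤ p j) (hpsum : HasSum p 1) (m : ℕ) :
    0 ≤ tailSum p m := by
  have := sum_le_hasSum (range m) (fun i _ => hpnn i) hpsum
  unfold tailSum; linarith

lemma tailSum_two (p : ℕ → ℝ) : tailSum p 2 = 1 - (p 0 + p 1) := by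
  unfold tailSum
  rw [Finset.sum_range_succ, Finset.sum_range_one]

lemma tailSum_succ (p : ℕ → ℝ) (m : ℕ) : tailSum p (m + 1) = tailSum p m - p m := by
  unfold tailSum
  rw [Finset.sum_range_succ]; ring

lemma tsum_tail (p : ℕ → ℝ) (hpsum : HasSum p 1) (m : ℕ) :
    (∑' k : ℕ, p (m + k)) = tailSum p m := by
  have h : HasSum (fun k => p (k + m)) (tailSum p m) := by
    rw [hasSum_nat_add_iff m]
    have : tailSum p m + ∑ i ∈ range m, p i = 1 := by unfold tailSum; ring
    rw [this]; exact hpsum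
  have h2 : (fun k => p (m + k)) = fun k => p (k + m) := by
    funext k; rw [Nat.add_comm]
  rw [h2, h.tsum_eq]

/-- the key identity: `p 0 * a n = ∑_{k<n} a k * h_{n+1-k}` -/
lemma key_id (C : ℕ) (p a : ℕ → ℝ) (hp0 : 0 < p 0) (ha0 : a 0 = 1)
    (ha1 : a 1 = (1 - p 0 - p 1) / p 0)
    (haRec : ∀ n, 2 ≤ n → n ≤ C - 1 →
      a n = (a (n - 1) - ∑ j ∈ Finset.Icc 1 n, p j * a (n - j)) / p 0) :
    ∀ n, 1 ≤ n → n ≤ C - 1 → p 0 * a n = ∑ k ∈ range n, a k * tailSum p (n + 1 - k) := by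
  intro n hn
  induction n, hn using Nat.le_induction with
  | base =>
    intro _
    rw [Finset.sum_range_one, ha0, ha1, tailSum_two, mul_div_cancel₀ _ (ne_of_gt hp0)]
    ring
  | succ n hn IH =>
    intro hle
    have hn' : n ≤ C - 1 := by omega
    have IH' := IH hn'
    have hrec : p 0 * a (n + 1) = a n - ∑ m ∈ Finset.Icc 1 (n + 1), p m * a (n + 1 - m) := by
      rw [haRec (n + 1) (by omega) hle, mul_div_cancel₀ _ (ne_of_gt hp0), Nat.add_sub_cancel]
    rw [hrec, conv_swap a p n]
    rw [Finset.sum_range_succ (fun k => a k * p (n + 1 - k)) n]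
    rw [Finset.sum_range_succ (fun k => a k * tailSum p (n + 1 + 1 - k)) n]
    have e2 : n + 1 - n = 1 := by omega
    have e3 : n + 1 + 1 - n = 2 := by omega
    rw [e2, e3]
    have hsplit : ∑ k ∈ range n, a k * tailSum p (n + 1 + 1 - k)
        = ∑ k ∈ range n, a k * tailSum p (n + 1 - k) - ∑ k ∈ range n, a k * p (n + 1 - k) := by
      rw [← Finset.sum_sub_distrib]
      refine Finset.sum_congr rfl fun k hk => ?_
      rw [Finset.mem_range] at hk
      have e4 : n + 1 + 1 - k = (n + 1 - k) + 1 := by omega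
      rw [e4, tailSum_succ]
      ring
    rw [hsplit, ← IH', tailSum_two]
    ring

/-- positivity of the coefficients -/
lemma a_pos (C : ℕ) (p a : ℕ → ℝ) (hpnn : ∀ j, 0 ≤ p j) (hpsum : HasSum p 1)
    (hp0 : 0 < p 0) (hp01 : p 0 + p 1 < 1) (ha0 : a 0 = 1)
    (ha1 : a 1 = (1 - p 0 - p 1) / p 0)
    (haRec : ∀ n, 2 ≤ n → n ≤ C - 1 →
      a n = (a (n - 1) - ∑ j ∈ Finset.Icc 1 n, p j * a (n - j)) / p 0) :
    ∀ n, n ≤ C - 1 → 0 < a n := by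
  intro n
  induction n using Nat.strong_induction_on with
  | _ n IH =>
    intro hn
    rcases Nat.eq_zero_or_pos n with rfl | hn0
    · rw [ha0]; norm_num
    · have hkey := key_id C p a hp0 ha0 ha1 haRec n hn0 hn
      have hpos : 0 < ∑ k ∈ range n, a k * tailSum p (n + 1 - k) := by
        refine Finset.sum_pos' (fun k hk => ?_) ⟨n - 1, ?_, ?_⟩
        · rw [Finset.mem_range] at hk
          exact mul_nonneg (le_of_lt (IH k hk (by omega)))
            (tailSum_nonneg p hpnn hpsum _)
        · rw [Finset.mem_range]; omega
        · have h1 : 0 < a (n - 1) := IH (n - 1) (by omega) (by omega)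
          have e : n + 1 - (n - 1) = 2 := by omega
          rw [e, tailSum_two]
          have : 0 < 1 - (p 0 + p 1) := by linarith
          exact mul_pos h1 this
      rw [← hkey] at hpos
      nlinarith
/-- row sums of the transition matrix are 1 -/
lemma moranP_rowsum (C : ℕ) (hC : 2 ≤ C) (p : ℕ → ℝ) (hpsum : HasSum p 1) (i : Fin C) :
    ∑ j : Fin C, moranP C p i j = 1 := by
  obtain ⟨D, rfl⟩ : ∃ D, C = D + 2 := ⟨C - 2, by omega⟩
  rw [Fin.sum_univ_castSucc]
  have hlast : moranP (D + 2) p i (Fin.last (D + 1)) = tailSum p (D + 2 - (i : ℕ)) := by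
    rw [moranP_apply_last (D + 2) p i (Fin.last (D + 1)) (by simp)]
    exact tsum_tail p hpsum _
  have hcast : ∀ j : Fin (D + 1),
      moranP (D + 2) p i (Fin.castSucc j) = moranE p (i : ℕ) (j : ℕ) := by
    intro j
    refine moranP_apply_ne _ p i _ ?_
    have := j.isLt
    simp only [Fin.coe_castSucc]
    omega
  rw [Finset.sum_congr rfl (fun j _ => hcast j), hlast]
  have := Fin.sum_univ_eq_sum_range (fun j => moranE p (i : ℕ) j) (D + 1)
  rw [this]
  have hD : D + 1 = (D + 2) - 1 := rfl
  rw [hD, rowsumE (D + 2) (by omega) p (i : ℕ) i.isLt]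
  unfold tailSum
  ring

/-- the stationarity identity at the coefficient level -/
lemma acol (C : ℕ) (p a : ℕ → ℝ) (hp0 : 0 < p 0) (ha0 : a 0 = 1)
    (ha1 : a 1 = (1 - p 0 - p 1) / p 0)
    (haRec : ∀ n, 2 ≤ n → n ≤ C - 1 →
      a n = (a (n - 1) - ∑ j ∈ Finset.Icc 1 n, p j * a (n - j)) / p 0)
    (j : ℕ) (hj : j + 1 < C) :
    (if j = 0 then a 0 * p 0 else 0) +
      (a (j + 1) * p 0 + ∑ m ∈ Icc 1 (j + 1), p m * a (j + 1 - m)) = a j := by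
  rcases Nat.eq_zero_or_pos j with rfl | hj0
  · rw [if_pos rfl, Finset.Icc_self, Finset.sum_singleton, ha0, ha1,
      div_mul_cancel₀ _ (ne_of_gt hp0)]
    norm_num
  · rw [if_neg (by omega), zero_add,
      haRec (j + 1) (by omega) (by omega), div_mul_cancel₀ _ (ne_of_gt hp0),
      Nat.add_sub_cancel]
    ring

/-- evaluate a vecMul entry at a non-last column -/
lemma vecMul_col (C : ℕ) (p : ℕ → ℝ) (v : Fin C → ℝ) (b : ℕ → ℝ)
    (hvb : ∀ i : Fin C, v i = b (i : ℕ)) (j : Fin C) (hj : (j : ℕ) + 1 < C) :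
    Matrix.vecMul v (moranP C p) j
      = (if (j : ℕ) = 0 then b 0 * p 0 else 0) +
        (b ((j : ℕ) + 1) * p 0 + ∑ m ∈ Icc 1 ((j : ℕ) + 1), p m * b ((j : ℕ) + 1 - m)) := by
  have h1 : Matrix.vecMul v (moranP C p) j = ∑ i : Fin C, v i * moranP C p i j := by
    simp [Matrix.vecMul, dotProduct]
  have h2 : ∀ i : Fin C, v i * moranP C p i j = (fun n => b n * moranE p n (j : ℕ)) (i : ℕ) := by
    intro i
    rw [hvb i, moranP_apply_ne C p i j (by omega)]
  rw [h1, Finset.sum_congr rfl (fun i _ => h2 i),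
    Fin.sum_univ_eq_sum_range (fun n => b n * moranE p n (j : ℕ)) C,
    colsum C p b (j : ℕ) hj]
lemma haRec_mul (C : ℕ) (p a : ℕ → ℝ) (hp0 : 0 < p 0)
    (haRec : ∀ n, 2 ≤ n → n ≤ C - 1 →
      a n = (a (n - 1) - ∑ j ∈ Finset.Icc 1 n, p j * a (n - j)) / p 0)
    (n : ℕ) (h2 : 2 ≤ n) (h3 : n ≤ C - 1) :
    p 0 * a n = a (n - 1) - ∑ m ∈ Finset.Icc 1 n, p m * a (n - m) := by
  rw [haRec n h2 h3, mul_div_cancel₀ _ (ne_of_gt hp0)]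
/-- the recursively defined coefficients `a_n`, normalized, give the unique
stationary probability distribution of the finite-capacity Moran transition matrix. -/
theorem stmt0 (C : ℕ) (hC : 2 ≤ C) (p : ℕ → ℝ) (hpnn : ∀ j, 0 ≤ p j) (hpsum : HasSum p 1)
    (hp0 : 0 < p 0) (hp01 : p 0 + p 1 < 1)
    (a : ℕ → ℝ) (ha0 : a 0 = 1) (ha1 : a 1 = (1 - p 0 - p 1) / p 0)
    (haRec : ∀ n, 2 ≤ n → n ≤ C - 1 →
      a n = (a (n - 1) - ∑ j ∈ Finset.Icc 1 n, p j * a (n - j)) / p 0)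
    (π : Fin C → ℝ) (hπ : ∀ n : Fin C, π n = a (n : ℕ) / ∑ m ∈ Finset.range C, a m) :
    (∀ n : Fin C, 0 ≤ π n) ∧ (∑ n : Fin C, π n = 1) ∧
      Matrix.vecMul π (moranP C p) = π ∧
      ∀ π' : Fin C → ℝ, (∀ n, 0 ≤ π' n) → (∑ n : Fin C, π' n = 1) →
        Matrix.vecMul π' (moranP C p) = π' → π' = π := by
  have hp0' : p 0 ≠ 0 := ne_of_gt hp0
  obtain ⟨D, rfl⟩ : ∃ D, C = D + 2 := ⟨C - 2, by omega⟩
  set S := ∑ m ∈ Finset.range (D + 2), a m with hSdef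
  have hapos : ∀ n, n ≤ D + 1 → 0 < a n := by
    intro n hn
    exact a_pos (D + 2) p a hpnn hpsum hp0 hp01 ha0 ha1 haRec n (by omega)
  have hS : 0 < S := by
    rw [hSdef]
    refine Finset.sum_pos (fun m hm => ?_) ⟨0, by simp⟩
    rw [Finset.mem_range] at hm
    exact hapos m (by omega)
  have hπb : ∀ i : Fin (D + 2), π i = (fun n => a n / S) (i : ℕ) := fun i => hπ i
  have part1 : ∀ n : Fin (D + 2), 0 ≤ π n := by
    intro n
    rw [hπ n]
    exact div_nonneg (le_of_lt (hapos (n : ℕ) (by have := n.isLt; omega))) (le_of_lt hS)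
  have part2 : ∑ n : Fin (D + 2), π n = 1 := by
    rw [Finset.sum_congr rfl (fun n _ => hπ n),
      Fin.sum_univ_eq_sum_range (fun n => a n / S) (D + 2),
      ← Finset.sum_div, ← hSdef, div_self (ne_of_gt hS)]
  have hstat : Matrix.vecMul π (moranP (D + 2) p) = π := by
    have hcol : ∀ j : Fin (D + 2), (j : ℕ) + 1 < D + 2 →
        Matrix.vecMul π (moranP (D + 2) p) j = π j := by
      intro j hj
      rw [vecMul_col (D + 2) p π (fun n => a n / S) hπb j hj, hπ j]
      have hsum : ∑ m ∈ Finset.Icc 1 ((j : ℕ) + 1), p m * (a ((j : ℕ) + 1 - m) / S)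
          = (∑ m ∈ Finset.Icc 1 ((j : ℕ) + 1), p m * a ((j : ℕ) + 1 - m)) / S := by
        rw [Finset.sum_div]
        exact Finset.sum_congr rfl fun m _ => (mul_div_assoc _ _ _).symm
      rw [hsum, ← acol (D + 2) p a hp0 ha0 ha1 haRec (j : ℕ) hj]
      split_ifs <;> ring
    have hsums : ∑ j : Fin (D + 2), Matrix.vecMul π (moranP (D + 2) p) j
        = ∑ j : Fin (D + 2), π j := by
      have h1 : ∀ j : Fin (D + 2), Matrix.vecMul π (moranP (D + 2) p) j
          = ∑ i : Fin (D + 2), π i * moranP (D + 2) p i j := fun j => by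
        simp [Matrix.vecMul, dotProduct]
      rw [Finset.sum_congr rfl (fun j _ => h1 j), Finset.sum_comm]
      refine Finset.sum_congr rfl fun i _ => ?_
      rw [← Finset.mul_sum, moranP_rowsum (D + 2) (by omega) p hpsum i, mul_one]
    funext j
    rcases Nat.lt_or_ge ((j : ℕ) + 1) (D + 2) with hj | hj
    · exact hcol j hj
    · have hjl : j = Fin.last (D + 1) := by
        have := j.isLt
        apply Fin.ext
        simp only [Fin.val_last]
        omega
      subst hjl
      have e1 := Fin.sum_univ_castSucc (fun j => Matrix.vecMul π (moranP (D + 2) p) j)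
      have e2 := Fin.sum_univ_castSucc (fun j : Fin (D + 2) => π j)
      rw [e1, e2] at hsums
      have heq : ∑ j : Fin (D + 1), Matrix.vecMul π (moranP (D + 2) p) (Fin.castSucc j)
          = ∑ j : Fin (D + 1), π (Fin.castSucc j) := by
        refine Finset.sum_congr rfl fun j _ => ?_
        refine hcol _ ?_
        have := j.isLt
        simp only [Fin.coe_castSucc]
        omega
      rw [heq] at hsums
      linarith
  refine ⟨part1, part2, hstat, ?_⟩
  intro π' _ hsum1 hfix
  set b : ℕ → ℝ := fun n => if h : n < D + 2 then π' ⟨n, h⟩ else 0 with hbdef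
  have hvb : ∀ i : Fin (D + 2), π' i = b (i : ℕ) := by
    intro i
    rw [hbdef]
    simp only [i.isLt, dif_pos]
  have hcoleq : ∀ j : ℕ, j + 1 < D + 2 →
      b j = (if j = 0 then b 0 * p 0 else 0) +
        (b (j + 1) * p 0 + ∑ m ∈ Finset.Icc 1 (j + 1), p m * b (j + 1 - m)) := by
    intro j hj
    have h := vecMul_col (D + 2) p π' b hvb ⟨j, by omega⟩ hj
    rw [hfix, hvb ⟨j, by omega⟩] at h
    exact h
  have hb : ∀ n, n < D + 2 → b n = b 0 * a n := by
    intro n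
    induction n using Nat.strong_induction_on with
    | _ n IH =>
      intro hn
      rcases Nat.eq_zero_or_pos n with rfl | hn0
      · rw [ha0]; ring
      · obtain ⟨j, rfl⟩ : ∃ j, n = j + 1 := ⟨n - 1, by omega⟩
        have h := hcoleq j hn
        rcases Nat.eq_zero_or_pos j with rfl | hj0
        · have hI : ∑ m ∈ Finset.Icc 1 (0 + 1), p m * b (0 + 1 - m) = p 1 * b 0 := by
            simp
          rw [if_pos rfl, hI] at h
          have ha1' : a 1 * p 0 = 1 - p 0 - p 1 := by
            rw [ha1, div_mul_cancel₀ _ hp0']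
          refine mul_right_cancel₀ hp0' ?_
          show b 1 * p 0 = b 0 * a 1 * p 0
          linear_combination -h - b 0 * ha1'
        · have hsplit : ∑ m ∈ Finset.Icc 1 (j + 1), p m * b (j + 1 - m)
              = b 0 * ∑ m ∈ Finset.Icc 1 (j + 1), p m * a (j + 1 - m) := by
            rw [Finset.mul_sum]
            refine Finset.sum_congr rfl fun m hm => ?_
            rw [Finset.mem_Icc] at hm
            rw [IH (j + 1 - m) (by omega) (by omega)]
            ring
          rw [if_neg (by omega), zero_add, hsplit, IH j (by omega) (by omega)] at h
          have hrec := haRec_mul (D + 2) p a hp0 haRec (j + 1) (by omega) (by omega)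
          rw [Nat.add_sub_cancel] at hrec
          refine mul_right_cancel₀ hp0' ?_
          linear_combination -h - b 0 * hrec
  have hsumb : b 0 * S = 1 := by
    rw [Finset.sum_congr rfl (fun n _ => hvb n), Fin.sum_univ_eq_sum_range b (D + 2)] at hsum1
    calc b 0 * S = ∑ n ∈ Finset.range (D + 2), b 0 * a n := by rw [hSdef, Finset.mul_sum]
      _ = ∑ n ∈ Finset.range (D + 2), b n := by
          refine Finset.sum_congr rfl fun n hn => ?_
          rw [Finset.mem_range] at hn
          rw [hb n hn]
      _ = 1 := hsum1
  have hb0 : b 0 = 1 / S := (eq_div_iff (ne_of_gt hS)).mpr hsumb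
  funext n
  rw [hvb n, hπ n, hb (n : ℕ) n.isLt, hb0]
  ring
end

section
/- For every n ≥ 0, the random variables Y_n and Z_n are independent, so that ℙ(Y_n = y, Z_n = z) = p_y · ℙ(Z_n = z) for all y ∈ ℕ and z ∈ {0,…,C−1}. Consequently, if in addition p_0 > 0 and p_0 + p_1 < 1, then for all y and z, lim_{n→∞} ℙ(Y_n = y, Z_n = z) = p_y π_z, where π is the unique stationary probability distribution of the transition matrix P; i.e. the joint process (Y_n, Z_n) has limiting distribution given by the product p_y π_z. -/
open scoped BigOperators
open MeasureTheory ProbabilityTheory Filter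

/-!
The level `Z n` is a measurable function of `Z 0, Y 0, …, Y (n - 1)`, hence independent of
`Y n`; this gives the product formula. It also makes the law `ν n` of `Z n` evolve linearly,
`ν (n + 1) = ν n ᵥ* P`, because `P i j` is exactly the `p`-mass of the inflows `y` that move
level `i` to level `j`. Since `p 0 > 0`, every level can step down to `0` and then stay there,
so the column of `0` in `P ^ C` is positive. Subtracting that column's minimum from all rows
shows that `P ^ C` contracts mass-zero vectors in `ℓ¹` by a factor `< 1` (Doeblin), so `ν n`
converges geometrically to `π`.
-/

open Finset Matrix Topology

lemma mul_apply_pos {l m n : Type*} [Fintype m] {A : Matrix l m ℝ} {B : Matrix m n ℝ}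
    (hA : ∀ i j, 0 ≤ A i j) (hB : ∀ i j, 0 ≤ B i j) {i : l} {k : m} {j : n}
    (hik : 0 < A i k) (hkj : 0 < B k j) : 0 < (A * B) i j :=
  (mul_pos hik hkj).trans_le <| single_le_sum (f := fun k => A i k * B k j)
    (fun _ _ => mul_nonneg (hA _ _) (hB _ _)) (mem_univ k)

lemma tendsto_zero_of_antitone_of_le_mul {D : ℕ → ℝ} (hD₀ : ∀ n, 0 ≤ D n) (hD : Antitone D)
    {s : ℕ} (hs : 0 < s) {θ : ℝ} (hθ₀ : 0 ≤ θ) (hθ₁ : θ < 1) (hcontr : ∀ n, D (n + s) ≤ θ * D n) :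
    Tendsto D atTop (𝓝 0) := by
  have hmul : ∀ k, D (s * k) ≤ θ ^ k * D 0 := fun k => by
    induction k with
    | zero => simp
    | succ k ih =>
      calc D (s * (k + 1)) = D (s * k + s) := by rw [mul_add_one]
        _ ≤ θ * D (s * k) := hcontr _
        _ ≤ θ * (θ ^ k * D 0) := mul_le_mul_of_nonneg_left ih hθ₀
        _ = θ ^ (k + 1) * D 0 := by ring
  have hupper : Tendsto (fun n => θ ^ (n / s) * D 0) atTop (𝓝 0) := by
    simpa using ((tendsto_pow_atTop_nhds_zero_of_lt_one hθ₀ hθ₁).comp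
      (Nat.tendsto_div_const_atTop hs.ne')).mul_const (D 0)
  exact squeeze_zero hD₀ (fun n => (hD (Nat.mul_div_le n s)).trans (hmul _)) hupper

section Doeblin

variable {ι : Type*} [Fintype ι]

lemma sum_abs_vecMul_le_of_minorant {Q : Matrix ι ι ℝ} (hQ : ∀ i, ∑ j, Q i j = 1)
    {r : ι → ℝ} (hr : ∀ i j, r j ≤ Q i j) {w : ι → ℝ} (hw : ∑ i, w i = 0) :
    ∑ j, |(w ᵥ* Q) j| ≤ (1 - ∑ j, r j) * ∑ i, |w i| := by
  -- as `∑ i, w i = 0`, removing the common row `r` from `Q` does not change `w ᵥ* Q`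
  have hwQ : ∀ j, (w ᵥ* Q) j = ∑ i, w i * (Q i j - r j) := fun j => by
    simp [vecMul, dotProduct, mul_sub, ← sum_mul, hw]
  calc ∑ j, |(w ᵥ* Q) j| = ∑ j, |∑ i, w i * (Q i j - r j)| := by simp only [hwQ]
    _ ≤ ∑ j, ∑ i, |w i| * (Q i j - r j) := by
      refine sum_le_sum fun j _ => (abs_sum_le_sum_abs _ _).trans_eq (sum_congr rfl fun i _ => ?_)
      rw [abs_mul, abs_of_nonneg (sub_nonneg.2 (hr i j))]
    _ = (1 - ∑ j, r j) * ∑ i, |w i| := by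
      rw [sum_comm, mul_sum]
      simp [← mul_sum, sum_sub_distrib, hQ, mul_comm]

variable [DecidableEq ι]

lemma sum_vecMul_of_mem_rowStochastic {M : Matrix ι ι ℝ} (hM : M ∈ rowStochastic ℝ ι)
    (x : ι → ℝ) : ∑ j, (x ᵥ* M) j = ∑ i, x i := by
  rw [← dotProduct_one, ← dotProduct_one, ← dotProduct_mulVec, one_vecMul_of_mem_rowStochastic hM]

theorem tendsto_vecMul_pow_of_doeblin {A : Matrix ι ι ℝ} (hA : A ∈ rowStochastic ℝ ι)
    {s : ℕ} (hs : 0 < s) {j₀ : ι} (hj₀ : ∀ i, 0 < (A ^ s) i j₀) {π : ι → ℝ}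
    (hπ : π ᵥ* A = π) {v : ι → ℝ} (hv : ∑ i, v i = ∑ i, π i) :
    Tendsto (fun n => v ᵥ* A ^ n) atTop (𝓝 π) := by
  have hAn : ∀ n, A ^ n ∈ rowStochastic ℝ ι := fun n => pow_mem hA n
  have hπn : ∀ n, π ᵥ* A ^ n = π := fun n => by
    induction n with
    | zero => simp
    | succ n ih => rw [pow_succ, ← vecMul_vecMul, ih, hπ]
  set w : ℕ → ι → ℝ := fun n => (v - π) ᵥ* A ^ n with hw
  have hw_sum : ∀ n, ∑ i, w n i = 0 := fun n => by
    simp only [hw, sum_vecMul_of_mem_rowStochastic (hAn n), Pi.sub_apply, sum_sub_distrib, hv,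
      sub_self]
  set D : ℕ → ℝ := fun n => ∑ i, |w n i| with hD
  have hD_anti : Antitone D := antitone_nat_of_succ_le fun n => by
    have := sum_abs_vecMul_le_of_minorant (r := 0) (sum_row_of_mem_rowStochastic hA)
      (fun i j => nonneg_of_mem_rowStochastic hA) (hw_sum n)
    simpa [hD, hw, pow_succ, vecMul_vecMul] using this
  have : Nonempty ι := ⟨j₀⟩
  obtain ⟨i₀, hi₀⟩ := Finite.exists_min fun i => (A ^ s) i j₀
  set ε := (A ^ s) i₀ j₀
  have hD_contract : ∀ n, D (n + s) ≤ (1 - ε) * D n := fun n => by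
    have := sum_abs_vecMul_le_of_minorant (r := Pi.single j₀ ε)
      (sum_row_of_mem_rowStochastic (hAn s)) (fun i j => ?_) (hw_sum n)
    · simpa [hD, hw, pow_add, vecMul_vecMul] using this
    · rcases eq_or_ne j j₀ with rfl | hj
      · simpa using hi₀ i
      · simpa [hj] using nonneg_of_mem_rowStochastic (hAn s)
  have hD_lim := tendsto_zero_of_antitone_of_le_mul
    (fun n => sum_nonneg fun i _ => abs_nonneg _) hD_anti hs
    (sub_nonneg.2 (le_one_of_mem_rowStochastic (hAn s))) (by linarith [hj₀ i₀]) hD_contract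
  refine tendsto_pi_nhds.2 fun j => tendsto_iff_norm_sub_tendsto_zero.2 ?_
  refine squeeze_zero (fun n => norm_nonneg _) (fun n => ?_) hD_lim
  calc ‖(v ᵥ* A ^ n) j - π j‖ = |w n j| := by simp [hw, sub_vecMul, hπn]
    _ ≤ D n := single_le_sum (f := fun i => |w n i|) (fun i _ => abs_nonneg _) (mem_univ j)

end Doeblin

section MoranMatrix

/- Truncated subtraction makes `z + y - 1` equal to `max (z + y - 1) 0`. -/
def moranStep (C z y : ℕ) : ℕ := min (z + y - 1) (C - 1)

lemma moranStep_lt {C : ℕ} (hC : 0 < C) (z y : ℕ) : moranStep C z y < C := by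
  unfold moranStep; omega

variable {C : ℕ} {p : ℕ → ℝ}

lemma moranP_eq_tsum_indicator (hC : 2 ≤ C) (i j : Fin C) :
    moranP C p i j = ∑' y, {y | moranStep C i y = j}.indicator p y := by
  have hi := i.isLt
  have hj := j.isLt
  simp only [moranP, of_apply]
  split_ifs with hlast h00 hle
  · have hsupp : Function.support ({y | moranStep C i y = j}.indicator p) ⊆
        Set.range (C - (i : ℕ) + ·) := fun y hy => by
      have : moranStep C i y = j := by by_contra h; simp [h] at hy
      unfold moranStep at this
      exact ⟨y - (C - i), show C - i + (y - (C - i)) = y by omega⟩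
    rw [← (add_right_injective (C - (i : ℕ))).tsum_eq hsupp]
    refine tsum_congr fun k => ?_
    rw [Set.indicator_of_mem (by simp only [Set.mem_ofPred_eq, moranStep]; omega)]
  · rw [tsum_eq_sum (s := {0, 1}) fun y hy => Set.indicator_of_notMem ?_ _]
    · simp only [Set.indicator_apply, moranStep, Finset.sum_pair zero_ne_one, Set.mem_ofPred_eq]
      rw [if_pos (by omega), if_pos (by omega)]
    · simp only [Finset.mem_insert, Finset.mem_singleton] at hy
      simp only [Set.mem_ofPred_eq, moranStep]; omega
  · rw [tsum_eq_single (j + 1 - i : ℕ) fun y hy => Set.indicator_of_notMem ?_ _]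
    · rw [Set.indicator_of_mem (by simp only [Set.mem_ofPred_eq, moranStep]; omega)]
    · simp only [Set.mem_ofPred_eq, moranStep]; omega
  · have hempty : {y | moranStep C i y = j} = ∅ := by
      ext y; simp only [moranStep, Set.mem_ofPred_eq, Set.mem_empty_iff_false, iff_false]; omega
    simp [hempty]

lemma moranP_mem_rowStochastic (hC : 2 ≤ C) (hpnn : ∀ j, 0 ≤ p j) (hpsum : HasSum p 1) :
    moranP C p ∈ rowStochastic ℝ (Fin C) := by
  refine mem_rowStochastic_iff_sum.2 ⟨fun i j => ?_, fun i => ?_⟩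
  · rw [moranP_eq_tsum_indicator hC]
    exact tsum_nonneg fun y => Set.indicator_nonneg (fun y _ => hpnn y) y
  · have hrow := hasSum_sum (s := (univ : Finset (Fin C))) fun j _ =>
      (hpsum.summable.indicator {y | moranStep C i y = j}).hasSum
    have hfiber : ∀ y, ∑ j : Fin C, {y | moranStep C i y = j}.indicator p y = p y := fun y => by
      rw [sum_eq_single ⟨moranStep C i y, moranStep_lt (by omega) i y⟩
        (fun j _ hj => Set.indicator_of_notMem (fun h => hj (Fin.ext h.symm)) p) (by simp)]
      exact Set.indicator_of_mem (s := {y | moranStep C i y = _}) rfl p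
    simp only [hfiber, ← moranP_eq_tsum_indicator hC] at hrow
    exact hrow.unique hpsum

lemma moranP_apply_pos (hC : 2 ≤ C) (hpnn : ∀ j, 0 ≤ p j) (hpsum : HasSum p 1) {i j : Fin C}
    {y : ℕ} (hy : moranStep C i y = j) (hpy : 0 < p y) : 0 < moranP C p i j := by
  rw [moranP_eq_tsum_indicator hC]
  refine hpy.trans_le ?_
  rw [← Set.indicator_of_mem (s := {y | moranStep C i y = j}) hy p]
  exact (hpsum.summable.indicator _).le_tsum y fun k _ =>
    Set.indicator_nonneg (fun y _ => hpnn y) k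

lemma moranP_pow_apply_zero_pos (hC : 2 ≤ C) (hpnn : ∀ j, 0 ≤ p j) (hpsum : HasSum p 1)
    (hp0 : 0 < p 0) (i : Fin C) : 0 < (moranP C p ^ C) i ⟨0, by omega⟩ := by
  have hP := moranP_mem_rowStochastic hC hpnn hpsum
  suffices h : ∀ n (i : Fin C), (i : ℕ) ≤ n → 0 < (moranP C p ^ n) i ⟨0, by omega⟩ from
    h C i i.isLt.le
  intro n
  induction n with
  | zero =>
    intro i hi
    have hi0 : i = ⟨0, by omega⟩ := Fin.ext (Nat.le_zero.1 hi)
    simp [hi0]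
  | succ n ih =>
    intro i hi
    -- `i - 1` truncates at `0`, so for `i = 0` this down-step is the loop at level `0`
    have hdown : 0 < moranP C p i ⟨i - 1, by omega⟩ :=
      moranP_apply_pos hC hpnn hpsum (y := 0) (by simp [moranStep]; omega) hp0
    rw [pow_succ']
    exact mul_apply_pos (fun _ _ => nonneg_of_mem_rowStochastic hP)
      (fun _ _ => nonneg_of_mem_rowStochastic (pow_mem hP n)) hdown (ih _ (by simp; omega))

end MoranMatrix

section Independence

variable {Ω : Type*} {Y Z : ℕ → Ω → ℕ} {F : ℕ → ℕ → ℕ}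

/- `{j | ∀ k ∈ j, k < n} = {none} ∪ {some k | k < n}` indexes `Z 0, Y 0, …, Y (n - 1)`. -/
lemma measurable_biSup_comap_of_recursion
    (hrec : ∀ n ω, Z (n + 1) ω = F (Z n ω) (Y n ω)) (n : ℕ) :
    Measurable[⨆ j ∈ {j : Option ℕ | ∀ k ∈ j, k < n},
      MeasurableSpace.comap (j.elim (Z 0) Y) inferInstance] (Z n) := by
  set 𝓕 : ℕ → MeasurableSpace Ω := fun n => ⨆ j ∈ {j : Option ℕ | ∀ k ∈ j, k < n},
      MeasurableSpace.comap (j.elim (Z 0) Y) inferInstance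
  have h𝓕 : ∀ n (j : Option ℕ), (∀ k ∈ j, k < n) → Measurable[𝓕 n] (j.elim (Z 0) Y) :=
    fun n j hj => measurable_iff_comap_le.2 <| le_iSup₂
      (f := fun (j : Option ℕ) (_ : ∀ k ∈ j, k < n) =>
        MeasurableSpace.comap (j.elim (Z 0) Y) inferInstance) j hj
  induction n with
  | zero => exact h𝓕 0 none (by simp)
  | succ n ih =>
    have hmono : 𝓕 n ≤ 𝓕 (n + 1) :=
      biSup_mono fun j hj k hk => (hj k hk).trans n.lt_succ_self
    have hZ : Measurable[𝓕 (n + 1)] (Z n) := ih.mono hmono le_rfl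
    have hY : Measurable[𝓕 (n + 1)] (Y n) := h𝓕 (n + 1) (some n) (by simp)
    rw [funext (hrec n)]
    exact (measurable_of_countable (Function.uncurry F)).comp (hZ.prodMk hY)

variable [MeasurableSpace Ω] {μ : Measure Ω}

lemma ProbabilityTheory.iIndepFun.indepFun_of_measurable_biSup {ι β γ : Type*}
    [mβ : MeasurableSpace β] [MeasurableSpace γ] {f : ι → Ω → β} (hf : iIndepFun f μ)
    (hmeas : ∀ i, Measurable (f i)) {i : ι} {T : Set ι} (hi : i ∉ T) {g : Ω → γ}
    (hg : Measurable[⨆ j ∈ T, mβ.comap (f j)] g) : IndepFun (f i) g μ := by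
  rw [IndepFun_iff_Indep]
  have h := indep_iSup_of_disjoint (fun j => (hmeas j).comap_le) hf.iIndep
    (Set.disjoint_singleton_left.2 hi)
  refine indep_of_indep_of_le_right (indep_of_indep_of_le_left h ?_) hg.comap_le
  exact le_iSup₂ (f := fun j (_ : j ∈ ({i} : Set ι)) => mβ.comap (f j)) i rfl

lemma measurable_of_recursion (hYmeas : ∀ n, Measurable (Y n)) (hZ0meas : Measurable (Z 0))
    (hrec : ∀ n ω, Z (n + 1) ω = F (Z n ω) (Y n ω)) : ∀ n, Measurable (Z n)
  | 0 => hZ0meas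
  | n + 1 => by
    rw [funext (hrec n)]
    exact (measurable_of_countable (Function.uncurry F)).comp
      ((measurable_of_recursion hYmeas hZ0meas hrec n).prodMk (hYmeas n))

lemma indepFun_of_recursion (hIndep : iIndepFun (fun i : Option ℕ => i.elim (Z 0) Y) μ)
    (hYmeas : ∀ n, Measurable (Y n)) (hZ0meas : Measurable (Z 0))
    (hrec : ∀ n ω, Z (n + 1) ω = F (Z n ω) (Y n ω)) (n : ℕ) : IndepFun (Y n) (Z n) μ :=
  hIndep.indepFun_of_measurable_biSup (i := some n) (Option.rec hZ0meas hYmeas)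
    (by simp) (measurable_biSup_comap_of_recursion hrec n)

end Independence

section Laws

variable {Ω : Type*} [MeasurableSpace Ω] {μ : Measure Ω} [IsFiniteMeasure μ]

lemma toReal_measure_preimage_eq_tsum_indicator {p : ℕ → ℝ} {X : Ω → ℕ} (hX : Measurable X)
    (hXp : ∀ j, (μ {ω | X ω = j}).toReal = p j) (S : Set ℕ) :
    (μ (X ⁻¹' S)).toReal = ∑' y, S.indicator p y := by
  rw [← tsum_measure_preimage_singleton S.to_countable fun y _ => hX (measurableSet_singleton y),
    ENNReal.tsum_toReal_eq fun _ => measure_ne_top _ _, ← _root_.tsum_subtype]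
  exact tsum_congr fun y => hXp y

lemma toReal_measure_map₂_eq_sum {C : ℕ} {X Y : Ω → ℕ} (hXY : IndepFun X Y μ)
    (hX : Measurable X) (hY : Measurable Y) (hXC : ∀ ω, X ω < C) (f : ℕ → ℕ → ℕ) (z : ℕ) :
    (μ {ω | f (X ω) (Y ω) = z}).toReal =
      ∑ i : Fin C, (μ {ω | X ω = i}).toReal * (μ (Y ⁻¹' {y | f i y = z})).toReal := by
  have hsplit :
      {ω | f (X ω) (Y ω) = z} = ⋃ i : Fin C, X ⁻¹' {(i : ℕ)} ∩ Y ⁻¹' {y | f i y = z} := by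
    ext ω
    simp only [Set.mem_ofPred_eq, Set.mem_iUnion, Set.mem_inter_iff, Set.mem_preimage,
      Set.mem_singleton_iff]
    exact ⟨fun h => ⟨⟨X ω, hXC ω⟩, rfl, h⟩, fun ⟨i, hi, h⟩ => hi ▸ h⟩
  have hdisj : Pairwise (Function.onFun Disjoint
      fun i : Fin C => X ⁻¹' {(i : ℕ)} ∩ Y ⁻¹' {y | f i y = z}) :=
    fun i j hij => (Set.disjoint_singleton.2 (Fin.val_injective.ne hij)).preimage X
      |>.mono Set.inter_subset_left Set.inter_subset_left
  rw [hsplit, measure_iUnion hdisj fun i => (hX (measurableSet_singleton _)).inter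
      (hY (Set.to_countable _).measurableSet), tsum_fintype,
    ENNReal.toReal_sum fun i _ => measure_ne_top _ _]
  refine sum_congr rfl fun i _ => ?_
  rw [hXY.measure_inter_preimage_eq_mul _ _ (measurableSet_singleton _)
    (Set.to_countable _).measurableSet, ENNReal.toReal_mul]
  rfl

variable (μ) in
noncomputable def lawVec (C : ℕ) (X : Ω → ℕ) : Fin C → ℝ := fun i => (μ {ω | X ω = i}).toReal

lemma sum_lawVec_eq_one [IsProbabilityMeasure μ] {C : ℕ} {X : Ω → ℕ} (hX : Measurable X)
    (hXC : ∀ ω, X ω < C) : ∑ i, lawVec μ C X i = 1 := by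
  unfold lawVec
  have hrange : X ⁻¹' ↑(range C) = Set.univ := by ext ω; simp [hXC ω]
  rw [Fin.sum_univ_eq_sum_range (fun i => (μ {ω | X ω = i}).toReal),
    ← ENNReal.toReal_sum fun _ _ => measure_ne_top _ _]
  change (∑ a ∈ range C, μ (X ⁻¹' {a})).toReal = 1
  rw [sum_measure_preimage_singleton _ fun y _ => hX (measurableSet_singleton y), hrange,
    measure_univ, ENNReal.toReal_one]

variable {C : ℕ} {p : ℕ → ℝ}

lemma lawVec_moranStep (hC : 2 ≤ C) {X Y : Ω → ℕ} (hXY : IndepFun X Y μ) (hX : Measurable X)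
    (hY : Measurable Y) (hXC : ∀ ω, X ω < C) (hYp : ∀ j, (μ {ω | Y ω = j}).toReal = p j) :
    lawVec μ C (fun ω => moranStep C (X ω) (Y ω)) = lawVec μ C X ᵥ* moranP C p := by
  funext z
  simp only [lawVec, vecMul, dotProduct, toReal_measure_map₂_eq_sum hXY hX hY hXC,
    toReal_measure_preimage_eq_tsum_indicator hY hYp, moranP_eq_tsum_indicator hC]

theorem tendsto_lawVec_of_moran [IsProbabilityMeasure μ] (hC : 2 ≤ C) (hpnn : ∀ j, 0 ≤ p j)
    (hpsum : HasSum p 1) (hp0 : 0 < p 0) {Y Z : ℕ → Ω → ℕ} (hYmeas : ∀ n, Measurable (Y n))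
    (hZmeas : ∀ n, Measurable (Z n)) (hYdist : ∀ n j, (μ {ω | Y n ω = j}).toReal = p j)
    (hindep : ∀ n, IndepFun (Y n) (Z n) μ) (hZlt : ∀ n ω, Z n ω < C)
    (hrec : ∀ n ω, Z (n + 1) ω = moranStep C (Z n ω) (Y n ω)) {π : Fin C → ℝ}
    (hπ1 : ∑ i, π i = 1) (hπP : π ᵥ* moranP C p = π) :
    Tendsto (fun n => lawVec μ C (Z n)) atTop (𝓝 π) := by
  have hpow : ∀ n, lawVec μ C (Z n) = lawVec μ C (Z 0) ᵥ* moranP C p ^ n := by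
    intro n
    induction n with
    | zero => simp
    | succ n ih =>
      rw [funext (hrec n), lawVec_moranStep hC (hindep n).symm (hZmeas n) (hYmeas n) (hZlt n)
        (hYdist n), ih, vecMul_vecMul, pow_succ]
  refine (tendsto_congr hpow).2 ?_
  exact tendsto_vecMul_pow_of_doeblin (moranP_mem_rowStochastic hC hpnn hpsum) (by omega)
    (moranP_pow_apply_zero_pos hC hpnn hpsum hp0) hπP
    (by rw [sum_lawVec_eq_one (hZmeas 0) (hZlt 0), hπ1])

end Laws

theorem stmt2_general
    {Ω : Type} [MeasurableSpace Ω] (μ : Measure Ω) [IsProbabilityMeasure μ]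
    (C : ℕ) (hC : 2 ≤ C) (p : ℕ → ℝ) (hpnn : ∀ j, 0 ≤ p j) (hpsum : HasSum p 1)
    (Y Z : ℕ → Ω → ℕ)
    (hYmeas : ∀ n, Measurable (Y n)) (hZ0meas : Measurable (Z 0))
    (hYdist : ∀ n j, (μ {ω | Y n ω = j}).toReal = p j)
    (hIndep : iIndepFun
      (fun i : Option ℕ => i.elim (Z 0) Y) μ)
    (hZ0lt : ∀ ω, Z 0 ω < C)
    (hrec : ∀ n ω, Z (n + 1) ω = min (Z n ω + Y n ω - 1) (C - 1))
    (hp0 : 0 < p 0)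
    (π : Fin C → ℝ) (hπ1 : ∑ i, π i = 1)
    (hπP : Matrix.vecMul π (moranP C p) = π) :
    (∀ n, IndepFun (Y n) (Z n) μ) ∧
    (∀ n y z, (μ {ω | Y n ω = y ∧ Z n ω = z}).toReal
      = p y * (μ {ω | Z n ω = z}).toReal) ∧
    (∀ y : ℕ, ∀ z : Fin C,
      Tendsto (fun n => (μ {ω | Y n ω = y ∧ Z n ω = (z : ℕ)}).toReal)
        atTop (nhds (p y * π z))) := by
  have hrec' : ∀ n ω, Z (n + 1) ω = moranStep C (Z n ω) (Y n ω) := hrec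
  have hZlt : ∀ n ω, Z n ω < C
    | 0 => hZ0lt
    | n + 1 => fun ω => hrec' n ω ▸ moranStep_lt (by omega) _ _
  have hindep := indepFun_of_recursion hIndep hYmeas hZ0meas hrec'
  have hjoint : ∀ n y z, (μ {ω | Y n ω = y ∧ Z n ω = z}).toReal
      = p y * (μ {ω | Z n ω = z}).toReal := fun n y z => by
    rw [← hYdist n y, ← ENNReal.toReal_mul]
    exact congrArg ENNReal.toReal <| (hindep n).measure_inter_preimage_eq_mul _ _
      (measurableSet_singleton y) (measurableSet_singleton z)
  have hlaw := tendsto_lawVec_of_moran hC hpnn hpsum hp0 hYmeas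
    (measurable_of_recursion hYmeas hZ0meas hrec') hYdist hindep hZlt hrec' hπ1 hπP
  refine ⟨hindep, hjoint, fun y z => ?_⟩
  simp only [hjoint]
  exact (tendsto_pi_nhds.1 hlaw z).const_mul (p y)

/-- for every `n`, the inflow `Y n` and the storage level `Z n` are independent,
with joint pmf `p y · ℙ(Z n = z)`; consequently the joint process `(Y n, Z n)` has limiting
distribution `p y · π z`, where `π` is the unique stationary distribution of the Moran matrix. -/
theorem stmt2
    {Ω : Type} [MeasurableSpace Ω] (μ : Measure Ω) [IsProbabilityMeasure μ]
    (C : ℕ) (hC : 2 ≤ C) (p : ℕ → ℝ) (hpnn : ∀ j, 0 ≤ p j) (hpsum : HasSum p 1)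
    (Y Z : ℕ → Ω → ℕ)
    (hYmeas : ∀ n, Measurable (Y n)) (hZ0meas : Measurable (Z 0))
    (hYdist : ∀ n j, (μ {ω | Y n ω = j}).toReal = p j)
    (hIndep : iIndepFun
      (fun i : Option ℕ => i.elim (Z 0) Y) μ)
    (hZ0lt : ∀ ω, Z 0 ω < C)
    (hrec : ∀ n ω, Z (n + 1) ω = min (Z n ω + Y n ω - 1) (C - 1))
    (hp0 : 0 < p 0) (hp01 : p 0 + p 1 < 1)
    (π : Fin C → ℝ) (hπnn : ∀ i, 0 ≤ π i) (hπ1 : ∑ i, π i = 1)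
    (hπP : Matrix.vecMul π (moranP C p) = π) :
    (∀ n, IndepFun (Y n) (Z n) μ) ∧
    (∀ n y z, (μ {ω | Y n ω = y ∧ Z n ω = z}).toReal
      = p y * (μ {ω | Z n ω = z}).toReal) ∧
    (∀ y : ℕ, ∀ z : Fin C,
      Tendsto (fun n => (μ {ω | Y n ω = y ∧ Z n ω = (z : ℕ)}).toReal)
        atTop (nhds (p y * π z))) :=
  stmt2_general μ C hC p hpnn hpsum Y Z hYmeas hZ0meas hYdist hIndep hZ0lt hrec hp0 π hπ1 hπP
end

section
/- (Stationary distribution, semi-infinite case.) Assume 0 < p_0 < 1, p_0 + p_1 < 1, and Q := ∑_{k=1}^{K−1} q_k < 1. Define a_0 = 1 and, for n ≥ 1, a_n = ∑_{k=1}^{min(n, K−1)} q_k a_{n−k}. Then the sequence (a_n)_{n≥0} is summable with ∑_{n=0}^∞ a_n = 1/(1−Q), and the sequence π_n := (1−Q) a_n (equivalently π_n = a_n π_0 with π_0 = (∑_m a_m)^{−1}) is a stationary probability distribution of P: π_n ≥ 0 for all n, ∑_{n=0}^∞ π_n = 1, and ∑_{i=0}^∞ π_i P(i,n) = π_n for every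 n ∈ ℕ. -/
/-!
Put `q 0 = 0`; then the recursion reads `a = δ₀ + q ∗ a`, a renewal equation. Its partial sums
satisfy `S_N ≤ 1 + Q S_N`, so `a` is summable, and the Cauchy product gives `∑ a = 1 + Q ∑ a`.

With the tails `T k = ∑_{j > k} p j` we have `p 0 * q k = T k`, so the recursion is the cut
equation `p 0 * a (n+1) = ∑_{i ≤ n} a i * T (n+1-i)`: the flow from `n+1` down to `n` equals the
flow from `{0, …, n}` up past `n`. Subtracting two consecutive cut equations and using
`T k - T (k+1) = p (k+1)` gives the balance equation of `P` at `n`.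
-/

open scoped BigOperators
open MeasureTheory ProbabilityTheory Filter

/-- Transition matrix of the infinite-capacity Moran storage chain on `ℕ`:
`P 0 0 = p 0 + p 1`, `P 0 j = p (j+1)` for `j ≥ 1`, and for `i ≥ 1`,
`P i j = p (j-i+1)` if `j ≥ i-1` and `P i j = 0` otherwise. -/
noncomputable def moranPInf (p : ℕ → ℝ) : ℕ → ℕ → ℝ := fun i j =>
  if i = 0 ∧ j = 0 then p 0 + p 1
  else if i ≤ j + 1 then p (j + 1 - i)
  else 0

/-- `qcoef p K k = (1/p₀) ∑_{j=k+1}^K p_j`. -/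
noncomputable def qcoef (p : ℕ → ℝ) (K k : ℕ) : ℝ :=
  (∑ j ∈ Finset.Icc (k + 1) K, p j) / p 0

open Finset

theorem Finset.sum_range_sum_range_mul_le {R : Type*} [CommSemiring R] [PartialOrder R]
    [IsOrderedRing R] {f g : ℕ → R} (hf : ∀ k, 0 ≤ f k) (hg : ∀ k, 0 ≤ g k) (N : ℕ) :
    ∑ n ∈ range N, ∑ k ∈ range (n + 1), f k * g (n - k) ≤
      (∑ k ∈ range N, f k) * ∑ k ∈ range N, g k := by
  rw [sum_comm' (t' := range N) (s' := fun k => Ico k N) (by intro n k; simp; omega), sum_mul]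
  gcongr with k hk
  rw [← mul_sum, sum_Ico_eq_sum_range]
  gcongr
  · exact hf k
  · simp only [add_tsub_cancel_left]
    exact sum_le_sum_of_subset_of_nonneg (range_subset_range.2 (Nat.sub_le _ _))
      fun i _ _ => hg i

def SolvesRenewal (q a : ℕ → ℝ) : Prop :=
  ∀ n, a n = (if n = 0 then 1 else 0) + ∑ k ∈ range (n + 1), q k * a (n - k)

section Renewal

variable {q a : ℕ → ℝ}

theorem SolvesRenewal.nonneg (ha : SolvesRenewal q a) (hq : ∀ k, 0 ≤ q k) (hq0 : q 0 = 0)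
    (n : ℕ) : 0 ≤ a n := by
  induction n using Nat.strong_induction_on with
  | _ n ih =>
    rw [ha, sum_range_succ', hq0, zero_mul, add_zero]
    refine add_nonneg (by split_ifs <;> norm_num) (sum_nonneg fun k hk => ?_)
    exact mul_nonneg (hq _) (ih _ (by simp at hk; omega))

theorem SolvesRenewal.sum_range_le (ha : SolvesRenewal q a) {Q : ℝ} (hq : ∀ k, 0 ≤ q k)
    (hq0 : q 0 = 0) (hqQ : HasSum q Q) (hQ : Q < 1) (N : ℕ) :
    ∑ n ∈ range N, a n ≤ (1 - Q)⁻¹ := by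
  have ha_nonneg := ha.nonneg hq hq0
  have hrec : ∑ n ∈ range N, a n ≤ 1 + Q * ∑ n ∈ range N, a n :=
    calc ∑ n ∈ range N, a n
        = ∑ n ∈ range N, (if n = 0 then 1 else 0 : ℝ) +
            ∑ n ∈ range N, ∑ k ∈ range (n + 1), q k * a (n - k) := by
          rw [← sum_add_distrib]; exact sum_congr rfl fun n _ => ha n
      _ ≤ 1 + (∑ k ∈ range N, q k) * ∑ n ∈ range N, a n := by
          gcongr
          · rw [sum_ite_eq']; split_ifs <;> norm_num
          · exact sum_range_sum_range_mul_le hq ha_nonneg N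
      _ ≤ 1 + Q * ∑ n ∈ range N, a n := by
          gcongr
          · exact sum_nonneg fun n _ => ha_nonneg n
          · exact sum_le_hasSum _ (fun k _ => hq k) hqQ
  rw [← one_div, le_div_iff₀ (by linarith)]
  linarith

theorem SolvesRenewal.hasSum (ha : SolvesRenewal q a) {Q : ℝ} (hq : ∀ k, 0 ≤ q k)
    (hq0 : q 0 = 0) (hqQ : HasSum q Q) (hQ : Q < 1) : HasSum a (1 - Q)⁻¹ := by
  have ha_nonneg := ha.nonneg hq hq0
  have hsum : Summable a := summable_of_sum_range_le ha_nonneg (ha.sum_range_le hq hq0 hqQ hQ)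
  have hconv := hasSum_sum_range_mul_of_summable_norm
    (hqQ.summable.congr fun k => (Real.norm_of_nonneg (hq k)).symm)
    (hsum.congr fun n => (Real.norm_of_nonneg (ha_nonneg n)).symm)
  rw [hqQ.tsum_eq] at hconv
  have hself : HasSum a (1 + Q * ∑' n, a n) := by
    convert (hasSum_ite_eq 0 (1 : ℝ)).add hconv using 1
    exact funext ha
  have hfix : ∑' n, a n = 1 + Q * ∑' n, a n := hsum.hasSum.unique hself
  have hval : ∑' n, a n = (1 - Q)⁻¹ := by
    rw [← one_div, eq_div_iff (by linarith)]
    linarith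
  exact hval ▸ hsum.hasSum

end Renewal

noncomputable def tailMass (p : ℕ → ℝ) (K k : ℕ) : ℝ :=
  ∑ j ∈ Icc (k + 1) K, p j

section TailMass

variable {p : ℕ → ℝ} {K : ℕ}

theorem tailMass_eq_zero_of_le {k : ℕ} (hk : K ≤ k) : tailMass p K k = 0 := by
  rw [tailMass, Icc_eq_empty (by omega), sum_empty]

theorem tailMass_eq_add_tailMass_succ (hpsupp : ∀ j, K < j → p j = 0) (k : ℕ) :
    tailMass p K k = p (k + 1) + tailMass p K (k + 1) := by
  rcases le_or_gt (k + 1) K with hk | hk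
  · rw [tailMass, tailMass, Icc_eq_cons_Ioc hk, sum_cons, Icc_add_one_left_eq_Ioc]
  · rw [tailMass_eq_zero_of_le (by omega), tailMass_eq_zero_of_le (by omega), hpsupp _ hk,
      add_zero]

theorem tailMass_zero (hpsum : ∑ j ∈ range (K + 1), p j = 1) : tailMass p K 0 = 1 - p 0 := by
  rw [tailMass, ← hpsum, range_eq_Ico, sum_eq_sum_Ico_succ_bot (Nat.succ_pos K)]
  simp [Ico_add_one_right_eq_Icc]

end TailMass

def CutBalanced (p : ℕ → ℝ) (K : ℕ) (π : ℕ → ℝ) : Prop :=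
  ∀ n, p 0 * π (n + 1) = ∑ i ∈ range (n + 1), π i * tailMass p K (n + 1 - i)

-- `qcoef p K 0` is `(1 - p 0) / p 0`, not `0`.
noncomputable def renewalCoef (p : ℕ → ℝ) (K k : ℕ) : ℝ :=
  if k = 0 then 0 else qcoef p K k

section RenewalCoef

variable {p : ℕ → ℝ} {K : ℕ}

theorem renewalCoef_zero : renewalCoef p K 0 = 0 := if_pos rfl

theorem qcoef_eq_zero_of_le {k : ℕ} (hk : K ≤ k) : qcoef p K k = 0 := by
  rw [qcoef, ← tailMass, tailMass_eq_zero_of_le hk, zero_div]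

theorem renewalCoef_nonneg (hpnn : ∀ j, 0 ≤ p j) (k : ℕ) : 0 ≤ renewalCoef p K k := by
  unfold renewalCoef qcoef
  split_ifs
  exacts [le_rfl, div_nonneg (sum_nonneg fun j _ => hpnn j) (hpnn 0)]

theorem hasSum_renewalCoef :
    HasSum (renewalCoef p K) (∑ k ∈ Icc 1 (K - 1), qcoef p K k) := by
  have hsupp : ∀ k ∉ Icc 1 (K - 1), renewalCoef p K k = 0 := by
    intro k hk
    rw [renewalCoef]
    split_ifs with h0
    · rfl
    · exact qcoef_eq_zero_of_le (by simp at hk; omega)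
  convert hasSum_sum_of_ne_finset_zero (L := .unconditional ℕ) hsupp using 1
  exact sum_congr rfl fun k hk => by simp at hk; simp [renewalCoef, show k ≠ 0 by omega]

theorem solvesRenewal_renewalCoef {a : ℕ → ℝ} (ha0 : a 0 = 1)
    (haRec : ∀ n, 1 ≤ n →
      a n = ∑ k ∈ Icc 1 (min n (K - 1)), qcoef p K k * a (n - k)) :
    SolvesRenewal (renewalCoef p K) a := by
  intro n
  rcases Nat.eq_zero_or_pos n with rfl | hn
  · simp [ha0, renewalCoef]
  · have hsub : Icc 1 (min n (K - 1)) ⊆ range (n + 1) := fun k hk => by simp at hk ⊢; omega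
    rw [haRec n hn, if_neg hn.ne', zero_add, ← sum_subset hsub fun k hk hk' => ?_]
    · refine sum_congr rfl fun k hk => ?_
      rw [mem_Icc] at hk
      rw [renewalCoef, if_neg (by omega)]
    · simp only [mem_range, mem_Icc, not_and_or, not_le] at hk hk'
      rw [renewalCoef]
      split_ifs
      · rw [zero_mul]
      · rw [qcoef_eq_zero_of_le (by omega), zero_mul]

theorem tailMass_eq_mul_renewalCoef (hp0 : p 0 ≠ 0) {k : ℕ} (hk : k ≠ 0) :
    tailMass p K k = p 0 * renewalCoef p K k := by
  rw [renewalCoef, if_neg hk, qcoef, ← tailMass, mul_div_cancel₀ _ hp0]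

theorem SolvesRenewal.cutBalanced {a : ℕ → ℝ} (ha : SolvesRenewal (renewalCoef p K) a)
    (hp0 : p 0 ≠ 0) : CutBalanced p K a := by
  intro n
  rw [ha, if_neg n.succ_ne_zero, zero_add, mul_sum, sum_range_succ', renewalCoef_zero,
    zero_mul, mul_zero, add_zero, ← sum_range_reflect]
  refine sum_congr rfl fun j hj => ?_
  rw [mem_range] at hj
  rw [tailMass_eq_mul_renewalCoef hp0 (by omega), show n + 1 - 1 - j + 1 = n + 1 - j by omega,
    show n + 1 - (n + 1 - j) = j by omega]
  ring

end RenewalCoef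

section Stationary

variable {p : ℕ → ℝ} {K : ℕ}

theorem moranPInf_eq_zero_of_lt {i j : ℕ} (h : j + 1 < i) : moranPInf p i j = 0 := by
  rw [moranPInf, if_neg (by omega), if_neg (by omega)]

theorem moranPInf_of_le {i j : ℕ} (hj : j ≠ 0) (h : i ≤ j + 1) :
    moranPInf p i j = p (j + 1 - i) := by
  rw [moranPInf, if_neg (by omega), if_pos h]

theorem CutBalanced.sum_range_mul_moranPInf {π : ℕ → ℝ} (hπ : CutBalanced p K π)
    (hpsupp : ∀ j, K < j → p j = 0) (hpsum : ∑ j ∈ range (K + 1), p j = 1) (n : ℕ) :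
    ∑ i ∈ range (n + 2), π i * moranPInf p i n = π n := by
  have hT0 := tailMass_zero hpsum
  cases n with
  | zero =>
    have hT := tailMass_eq_add_tailMass_succ hpsupp 0
    have h0 := hπ 0
    simp only [zero_add, range_one, sum_singleton] at hT h0
    have hP00 : moranPInf p 0 0 = p 0 + p 1 := if_pos ⟨rfl, rfl⟩
    have hP10 : moranPInf p 1 0 = p 0 := by simp [moranPInf]
    rw [sum_range_succ, sum_range_one, hP00, hP10]
    linear_combination π 0 * hT0 - π 0 * hT + h0
  | succ m =>
    have hstep : ∀ i ∈ range (m + 2),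
        π i * p (m + 2 - i) =
          π i * tailMass p K (m + 1 - i) - π i * tailMass p K (m + 2 - i) := by
      intro i hi
      rw [mem_range] at hi
      rw [tailMass_eq_add_tailMass_succ hpsupp (m + 1 - i),
        show m + 1 - i + 1 = m + 2 - i by omega]
      ring
    calc ∑ i ∈ range (m + 3), π i * moranPInf p i (m + 1)
        = ∑ i ∈ range (m + 2), π i * p (m + 2 - i) + π (m + 2) * p 0 := by
          rw [sum_range_succ, moranPInf_of_le m.succ_ne_zero le_rfl, Nat.sub_self]
          congr 1
          exact sum_congr rfl fun i hi => by
            rw [moranPInf_of_le m.succ_ne_zero (by simp at hi; omega)]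
      _ = π (m + 1) * tailMass p K 0 + ∑ i ∈ range (m + 1), π i * tailMass p K (m + 1 - i)
            - ∑ i ∈ range (m + 2), π i * tailMass p K (m + 2 - i) + π (m + 2) * p 0 := by
          rw [sum_congr rfl hstep, sum_sub_distrib, sum_range_succ _ (m + 1), Nat.sub_self]
          ring
      _ = π (m + 1) := by
          rw [← hπ m, ← hπ (m + 1), hT0]
          ring

theorem CutBalanced.tsum_mul_moranPInf {π : ℕ → ℝ} (hπ : CutBalanced p K π)
    (hpsupp : ∀ j, K < j → p j = 0) (hpsum : ∑ j ∈ range (K + 1), p j = 1) (n : ℕ) :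
    ∑' i, π i * moranPInf p i n = π n := by
  rw [tsum_eq_sum (s := range (n + 2)) fun i hi => by
    rw [moranPInf_eq_zero_of_lt (by simp at hi; omega), mul_zero]]
  exact hπ.sum_range_mul_moranPInf hpsupp hpsum n

end Stationary

theorem stmt10_general (K : ℕ) (p : ℕ → ℝ) (hpnn : ∀ j, 0 ≤ p j)
    (hpsupp : ∀ j, K < j → p j = 0) (hpsum : ∑ j ∈ Finset.range (K + 1), p j = 1)
    (hp0 : 0 < p 0)
    (Q : ℝ) (hQ : Q = ∑ k ∈ Finset.Icc 1 (K - 1), qcoef p K k) (hQlt : Q < 1)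
    (a : ℕ → ℝ) (ha0 : a 0 = 1)
    (haRec : ∀ n, 1 ≤ n →
      a n = ∑ k ∈ Finset.Icc 1 (min n (K - 1)), qcoef p K k * a (n - k)) :
    Summable a ∧ (∑' n, a n = 1 / (1 - Q)) ∧
    (∀ n, 0 ≤ (1 - Q) * a n) ∧ (∑' n, (1 - Q) * a n = 1) ∧
    (∀ n, ∑' i, ((1 - Q) * a i) * moranPInf p i n = (1 - Q) * a n) := by
  have ha := solvesRenewal_renewalCoef ha0 haRec
  have hq := renewalCoef_nonneg (K := K) hpnn
  have hA : HasSum a (1 - Q)⁻¹ := ha.hasSum hq renewalCoef_zero (hQ ▸ hasSum_renewalCoef) hQlt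
  have h1Q : 1 - Q ≠ 0 := by linarith
  refine ⟨hA.summable, by rw [hA.tsum_eq, one_div],
    fun n => mul_nonneg (by linarith) (ha.nonneg hq renewalCoef_zero n),
    by rw [tsum_mul_left, hA.tsum_eq, mul_inv_cancel₀ h1Q], fun n => ?_⟩
  simp_rw [mul_assoc]
  rw [tsum_mul_left, (ha.cutBalanced hp0.ne').tsum_mul_moranPInf hpsupp hpsum n]

/-- stationary distribution of the semi-infinite dam: the recursively defined
sequence `a` is summable with sum `1/(1-Q)`, and `π n = (1-Q) a n` is a stationary
probability distribution of the infinite-capacity Moran transition matrix. -/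
theorem stmt10 (K : ℕ) (hK : 2 ≤ K) (p : ℕ → ℝ) (hpnn : ∀ j, 0 ≤ p j)
    (hpsupp : ∀ j, K < j → p j = 0) (hpsum : ∑ j ∈ Finset.range (K + 1), p j = 1)
    (hp0 : 0 < p 0) (hp0' : p 0 < 1) (hp01 : p 0 + p 1 < 1)
    (Q : ℝ) (hQ : Q = ∑ k ∈ Finset.Icc 1 (K - 1), qcoef p K k) (hQlt : Q < 1)
    (a : ℕ → ℝ) (ha0 : a 0 = 1)
    (haRec : ∀ n, 1 ≤ n →
      a n = ∑ k ∈ Finset.Icc 1 (min n (K - 1)), qcoef p K k * a (n - k)) :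
    Summable a ∧ (∑' n, a n = 1 / (1 - Q)) ∧
    (∀ n, 0 ≤ (1 - Q) * a n) ∧ (∑' n, (1 - Q) * a n = 1) ∧
    (∀ n, ∑' i, ((1 - Q) * a i) * moranPInf p i n = (1 - Q) * a n) :=
  stmt10_general K p hpnn hpsupp hpsum hp0 Q hQ hQlt a ha0 haRec
end

section
/- (Generating function identity for the semi-infinite dam.) Let π = (π_i)_{i≥0} be a nonnegative summable sequence with ∑_{i=0}^∞ π_i = 1 satisfying the stationarity equations ∑_{i=0}^∞ π_i P(i,n) = π_n for every n ∈ ℕ. Then for every real s with |s| ≤ 1, G(s) (H(s) − s) = (1 − s) p_0 π_0, where G(s) = ∑_{i=0}^∞ π_i s^i and H(s) = ∑_{i=0}^K p_i s^i. -/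
open scoped BigOperators
open MeasureTheory ProbabilityTheory Filter

/-!
Multiplying the stationarity equations by `s ^ n` and summing: the Cauchy product of `π` and `p`
has coefficients `c₀ = π₀ p₀` and `c (n+1) = π n - [n = 0] π₀ p₀`, so
`G(s) H(s) = ∑ cₙ sⁿ = π₀ p₀ + s (G(s) - π₀ p₀)`. Everything converges absolutely for `|s| ≤ 1`,
since a summable real sequence is absolutely summable and `H` is a polynomial.
-/

open Finset

theorem hasSum_sum_antidiagonal_mul_pow {R : Type*} [NormedCommRing R] [CompleteSpace R]
    {a b : ℕ → R} {s : R} (ha : Summable fun n => ‖a n * s ^ n‖)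
    (hb : Summable fun n => ‖b n * s ^ n‖) :
    HasSum (fun n => (∑ x ∈ antidiagonal n, a x.1 * b x.2) * s ^ n)
      ((∑' n, a n * s ^ n) * ∑' n, b n * s ^ n) := by
  have hterm : (fun n => (∑ x ∈ antidiagonal n, a x.1 * b x.2) * s ^ n)
      = fun n => ∑ x ∈ antidiagonal n, a x.1 * s ^ x.1 * (b x.2 * s ^ x.2) := by
    ext n
    rw [sum_mul]
    refine sum_congr rfl fun x hx => ?_
    rw [← mem_antidiagonal.mp hx, pow_add]
    ring
  rw [hterm, tsum_mul_tsum_eq_tsum_sum_antidiagonal_of_summable_norm ha hb]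
  exact (summable_norm_sum_mul_antidiagonal_of_summable_norm ha hb).of_norm.hasSum

theorem moranPInf_of_le_add_one (p : ℕ → ℝ) {i j : ℕ} (h : i ≤ j + 1) :
    moranPInf p i j = p (j + 1 - i) + if i = 0 ∧ j = 0 then p 0 else 0 := by
  unfold moranPInf
  split_ifs with h0
  · obtain ⟨rfl, rfl⟩ := h0
    ring
  · rw [add_zero]

theorem tsum_mul_moranPInf (p π : ℕ → ℝ) (n : ℕ) :
    ∑' i, π i * moranPInf p i n
      = (∑ x ∈ antidiagonal (n + 1), π x.1 * p x.2) + if n = 0 then π 0 * p 0 else 0 := by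
  have hvanish : ∀ i ∉ range (n + 2), π i * moranPInf p i n = 0 := by
    intro i hi
    have : n + 2 ≤ i := by simpa using hi
    simp [moranPInf, show ¬ i ≤ n + 1 by omega, show i ≠ 0 by omega]
  rw [tsum_eq_sum hvanish, Nat.sum_antidiagonal_eq_sum_range_succ_mk]
  rw [sum_congr rfl fun i hi => by
    rw [moranPInf_of_le_add_one p (Nat.lt_succ_iff.mp (mem_range.mp hi)), mul_add]]
  rw [sum_add_distrib]
  congr 1
  rw [sum_eq_single 0 (fun i _ hi => by simp [hi]) (by simp)]
  simp only [true_and, mul_ite, mul_zero]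

theorem sum_antidiagonal_succ_of_stationary {p π : ℕ → ℝ}
    (hπP : ∀ n, ∑' i, π i * moranPInf p i n = π n) (n : ℕ) :
    ∑ x ∈ antidiagonal (n + 1), π x.1 * p x.2 = π n - if n = 0 then π 0 * p 0 else 0 := by
  rw [← hπP, tsum_mul_moranPInf]
  ring

theorem stmt11_general (K : ℕ) (p : ℕ → ℝ)
    (hpsupp : ∀ j, K < j → p j = 0)
    (π : ℕ → ℝ) (hπsum : Summable π)
    (hπP : ∀ n, ∑' i, π i * moranPInf p i n = π n) :
    ∀ s : ℝ, |s| ≤ 1 →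
      (∑' i, π i * s ^ i) * ((∑ i ∈ Finset.range (K + 1), p i * s ^ i) - s)
        = (1 - s) * p 0 * π 0 := by
  intro s hs
  have hG : Summable fun n => ‖π n * s ^ n‖ := by
    refine hπsum.abs.of_nonneg_of_le (fun _ => norm_nonneg _) fun n => ?_
    rw [norm_mul, norm_pow, Real.norm_eq_abs, Real.norm_eq_abs]
    exact mul_le_of_le_one_right (abs_nonneg _) (pow_le_one₀ (abs_nonneg s) hs)
  have hpoly : ∀ n ∉ range (K + 1), p n * s ^ n = 0 := fun n hn => by
    rw [hpsupp n (by simpa using hn), zero_mul]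
  have hH : Summable fun n => ‖p n * s ^ n‖ :=
    summable_of_ne_finset_zero (s := range (K + 1)) fun n hn => by rw [hpoly n hn, norm_zero]
  have hprod := hasSum_sum_antidiagonal_mul_pow hG hH
  rw [tsum_eq_sum hpoly, ← hasSum_nat_add_iff' 1] at hprod
  have hshift : HasSum (fun n => (∑ x ∈ antidiagonal (n + 1), π x.1 * p x.2) * s ^ (n + 1))
      (s * ∑' n, π n * s ^ n - π 0 * p 0 * s) := by
    simp_rw [sum_antidiagonal_succ_of_stationary hπP]
    have hterm : (fun n => (π n - if n = 0 then π 0 * p 0 else 0) * s ^ (n + 1))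
        = fun n => s * (π n * s ^ n) - if n = 0 then π 0 * p 0 * s else 0 := by
      ext n
      split_ifs with hn
      · subst hn
        ring
      · ring
    rw [hterm]
    exact (hG.of_norm.hasSum.mul_left s).sub (hasSum_ite_eq 0 (π 0 * p 0 * s))
  have hcoeffs := hprod.unique hshift
  simp only [range_one, sum_singleton, Nat.antidiagonal_zero, pow_zero, mul_one] at hcoeffs
  linear_combination hcoeffs

/-- generating function identity for the semi-infinite dam: any stationary
probability distribution `π` of the infinite-capacity Moran matrix satisfies
`G(s)(H(s) − s) = (1 − s) p₀ π₀` for all `|s| ≤ 1`. -/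
theorem stmt11 (K : ℕ) (hK : 2 ≤ K) (p : ℕ → ℝ) (hpnn : ∀ j, 0 ≤ p j)
    (hpsupp : ∀ j, K < j → p j = 0) (hpsum : ∑ j ∈ Finset.range (K + 1), p j = 1)
    (π : ℕ → ℝ) (hπnn : ∀ i, 0 ≤ π i) (hπsum : Summable π) (hπ1 : ∑' i, π i = 1)
    (hπP : ∀ n, ∑' i, π i * moranPInf p i n = π n) :
    ∀ s : ℝ, |s| ≤ 1 →
      (∑' i, π i * s ^ i) * ((∑ i ∈ Finset.range (K + 1), p i * s ^ i) - s)
        = (1 - s) * p 0 * π 0 :=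
  stmt11_general K p hpsupp π hπsum hπP
end

section
/- (Fixed-point equation for the limiting storage distribution.) Assume in addition that G is continuous and that the laws μ_n of Z_n converge weakly, as n → ∞, to a probability measure μ on [0, C_1 − c_0] with cumulative distribution function F(z) = μ([0, z]). Then for every z ∈ [0, C_1 − c_0) that is a continuity point of F, F(z) = ∫_{[0, C_1−c_0]} G(c_0 + z − x) dμ(x). -/
open MeasureTheory ProbabilityTheory Filter

/-!
Since `Z n` is a measurable function of `Z 0, Y 0, …, Y (n-1)`, it is independent of `Y n`, so
for `0 ≤ z < C1 - c0` conditioning on `Z n` gives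
`ℙ(Z (n+1) ≤ z) = ℙ(Z n + Y n ≤ c0 + z) = ∫ G (c0 + z - x) d(law of Z n)`.
As `n → ∞` the left side tends to `F z` by the portmanteau theorem (continuity of `F = cdf ν` at
`z` means `ν` has no atom there), and the right side tends to `∫ G (c0 + z - x) dν` because
`x ↦ G (c0 + z - x)` is bounded and continuous.
-/

open Set Topology

section Recursion

variable {Ω β : Type*} [mβ : MeasurableSpace β] {X ξ : ℕ → Ω → β} {g : β → β → β}

/-- The index set `{i | ∀ k ∈ i, k < n}` consists of `none`, standing for `X 0`, and `some k`,
standing for `ξ k`, for `k < n`. -/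
lemma measurable_iSup_comap_of_recursion (hg : Measurable (Function.uncurry g))
    (hrec : ∀ n ω, X (n + 1) ω = g (X n ω) (ξ n ω)) (n : ℕ) :
    Measurable[⨆ i ∈ {i : Option ℕ | ∀ k ∈ i, k < n}, mβ.comap (i.elim (X 0) ξ)] (X n) := by
  induction n with
  | zero =>
    exact Measurable.of_comap_le (le_iSup₂_of_le (f := fun (i : Option ℕ) (_ : ∀ k ∈ i, k < 0) =>
      mβ.comap (i.elim (X 0) ξ)) none (by simp) le_rfl)
  | succ n ih =>
    have hX : X (n + 1) = fun ω => Function.uncurry g (X n ω, ξ n ω) := funext (hrec n)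
    rw [hX]
    refine hg.comp (Measurable.prodMk ?_ ?_)
    · exact ih.mono (iSup₂_mono' fun i hi => ⟨i, fun k hk => (hi k hk).trans n.lt_succ_self,
        le_rfl⟩) le_rfl
    · exact Measurable.of_comap_le (le_iSup₂_of_le (f := fun (i : Option ℕ)
        (_ : ∀ k ∈ i, k < n + 1) => mβ.comap (i.elim (X 0) ξ)) (some n) (by simp) le_rfl)

variable [MeasurableSpace Ω]

lemma measurable_option_elim (hX0 : Measurable (X 0)) (hξ : ∀ n, Measurable (ξ n))
    (i : Option ℕ) : Measurable (i.elim (X 0) ξ) := by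
  cases i
  exacts [hX0, hξ _]

lemma measurable_of_recursion_s15 (hg : Measurable (Function.uncurry g))
    (hrec : ∀ n ω, X (n + 1) ω = g (X n ω) (ξ n ω)) (hX0 : Measurable (X 0))
    (hξ : ∀ n, Measurable (ξ n)) (n : ℕ) : Measurable (X n) :=
  (measurable_iSup_comap_of_recursion hg hrec n).mono
    (iSup₂_le fun i _ => (measurable_option_elim hX0 hξ i).comap_le) le_rfl

lemma indepFun_of_recursion_s15 {μ : Measure Ω} (hg : Measurable (Function.uncurry g))
    (hrec : ∀ n ω, X (n + 1) ω = g (X n ω) (ξ n ω)) (hX0 : Measurable (X 0))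
    (hξ : ∀ n, Measurable (ξ n)) (hind : iIndepFun (fun i : Option ℕ => i.elim (X 0) ξ) μ)
    (n : ℕ) : IndepFun (X n) (ξ n) μ := by
  have hpast_future := indep_iSup_of_disjoint (measurable_option_elim hX0 hξ · |>.comap_le)
    hind.iIndep (S := {i : Option ℕ | ∀ k ∈ i, k < n}) (T := {some n}) (by simp)
  rw [IndepFun_iff_Indep]
  refine indep_of_indep_of_le_right (indep_of_indep_of_le_left hpast_future
    (measurable_iSup_comap_of_recursion hg hrec n).comap_le) ?_
  exact le_iSup₂_of_le (f := fun (i : Option ℕ) (_ : i ∈ ({some n} : Set (Option ℕ))) =>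
    mβ.comap (i.elim (X 0) ξ)) (some n) rfl le_rfl

end Recursion

lemma min_max_le_iff_of_le_of_lt {α : Type*} [LinearOrder α] {a b c d : α} (hda : d ≤ a)
    (hab : a < b) : min (max c d) b ≤ a ↔ c ≤ a := by
  simp [hda, hab.not_ge]

lemma ProbabilityTheory.IndepFun.measureReal_add_le_eq_integral_cdf {Ω : Type*}
    [MeasurableSpace Ω] {μ : Measure Ω} [IsProbabilityMeasure μ] {X ξ : Ω → ℝ} (hX : Measurable X)
    (hξ : Measurable ξ) (h : IndepFun X ξ μ) (t : ℝ) :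
    μ.real {ω | X ω + ξ ω ≤ t} = ∫ x, cdf (μ.map ξ) (t - x) ∂(μ.map X) := by
  have : IsProbabilityMeasure (μ.map ξ) := Measure.isProbabilityMeasure_map hξ.aemeasurable
  have hs : MeasurableSet {p : ℝ × ℝ | p.1 + p.2 ≤ t} :=
    measurableSet_le (by fun_prop) measurable_const
  have hslice : ∀ x, Prod.mk x ⁻¹' {p : ℝ × ℝ | p.1 + p.2 ≤ t} = Iic (t - x) := fun x => by
    ext y; simp [le_sub_iff_add_le']
  calc μ.real {ω | X ω + ξ ω ≤ t}
      = (μ.map fun ω => (X ω, ξ ω)).real {p : ℝ × ℝ | p.1 + p.2 ≤ t} :=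
        (map_measureReal_apply (hX.prodMk hξ) hs).symm
    _ = ((μ.map X).prod (μ.map ξ)).real {p : ℝ × ℝ | p.1 + p.2 ≤ t} := by
        rw [(indepFun_iff_map_prod_eq_prod_map_map hX.aemeasurable hξ.aemeasurable).1 h]
    _ = ∫ x, cdf (μ.map ξ) (t - x) ∂(μ.map X) := by
        rw [measureReal_def, Measure.prod_apply hs, ← integral_toReal
          (measurable_measure_prodMk_left hs).aemeasurable
          (ae_of_all _ fun _ => measure_lt_top _ _)]
        simp_rw [hslice, cdf_eq_real, measureReal_def]

lemma ProbabilityTheory.IndepFun.measureReal_min_max_le_eq_integral_cdf {Ω : Type*}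
    [MeasurableSpace Ω] {μ : Measure Ω} [IsProbabilityMeasure μ] {X ξ : Ω → ℝ}
    (hX : Measurable X) (hξ : Measurable ξ) (h : IndepFun X ξ μ) {c C z : ℝ} (hz0 : 0 ≤ z)
    (hzC : z < C) :
    μ.real {ω | min (max (X ω + ξ ω - c) 0) C ≤ z} =
      ∫ x, cdf (μ.map ξ) (c + z - x) ∂(μ.map X) := by
  simp only [min_max_le_iff_of_le_of_lt hz0 hzC, sub_le_iff_le_add']
  exact h.measureReal_add_le_eq_integral_cdf hX hξ (c + z)

lemma cdf_eq_measureReal_Icc {ν : Measure ℝ} [IsProbabilityMeasure ν] {a : ℝ}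
    (h : ν (Iio a) = 0) (x : ℝ) : cdf ν x = ν.real (Icc a x) := by
  rw [cdf_eq_real, ← Iic_inter_Ici, measureReal_def, measureReal_def,
    measure_inter_conull (by rwa [compl_Ici])]

lemma measure_singleton_eq_zero_of_continuousAt_cdf {ν : Measure ℝ} [IsProbabilityMeasure ν]
    {x : ℝ} (h : ContinuousAt (cdf ν) x) : ν {x} = 0 := by
  rw [← measure_cdf ν, StieltjesFunction.measure_singleton, h.continuousWithinAt.leftLim_eq,
    sub_self, ENNReal.ofReal_zero]

section WeakConvergence

variable {ι : Type*} {L : Filter ι} {μs : ι → ProbabilityMeasure ℝ} {μ : ProbabilityMeasure ℝ}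

lemma tendsto_cdf_of_tendsto (hμs : Tendsto μs L (𝓝 μ)) {x : ℝ}
    (hx : ContinuousAt (cdf (μ : Measure ℝ)) x) :
    Tendsto (fun i => cdf (μs i : Measure ℝ) x) L (𝓝 (cdf (μ : Measure ℝ) x)) := by
  simp_rw [cdf_eq_real, measureReal_def]
  refine (ENNReal.tendsto_toReal (measure_ne_top _ _)).comp
    (ProbabilityMeasure.tendsto_measure_of_null_frontier_of_tendsto' hμs ?_)
  rw [frontier_Iic]
  exact measure_singleton_eq_zero_of_continuousAt_cdf hx

lemma tendsto_integral_cdf_sub_of_tendsto {ρ : Measure ℝ} [IsProbabilityMeasure ρ]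
    (hρ : Continuous (cdf ρ)) (hμs : Tendsto μs L (𝓝 μ)) (t : ℝ) :
    Tendsto (fun i => ∫ x, cdf ρ (t - x) ∂(μs i : Measure ℝ)) L
      (𝓝 (∫ x, cdf ρ (t - x) ∂(μ : Measure ℝ))) :=
  ProbabilityMeasure.tendsto_iff_forall_integral_tendsto.1 hμs
    (BoundedContinuousFunction.mkOfBound ⟨fun x => cdf ρ (t - x), by fun_prop⟩ 1 fun x y =>
      Real.dist_le_of_mem_Icc_01 ⟨cdf_nonneg _ _, cdf_le_one _ _⟩ ⟨cdf_nonneg _ _, cdf_le_one _ _⟩)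

end WeakConvergence

theorem stmt15_general
    (c0 C1 : ℝ)
    {Ω : Type} [MeasurableSpace Ω] (μ : Measure Ω) [IsProbabilityMeasure μ]
    (Y Z : ℕ → Ω → ℝ)
    (hYmeas : ∀ n, Measurable (Y n)) (hZ0meas : Measurable (Z 0))
    (hYid : ∀ n, Measure.map (Y n) μ = Measure.map (Y 0) μ)
    (G : ℝ → ℝ) (hG : ∀ y, G y = (μ {ω | Y 0 ω ≤ y}).toReal)
    (hIndep : iIndepFun
      (fun i : Option ℕ => i.elim (Z 0) Y) μ)
    (hrec : ∀ n ω, Z (n + 1) ω = min (max (Z n ω + Y n ω - c0) 0) (C1 - c0))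
    (hGcont : Continuous G)
    (ν : Measure ℝ) [IsProbabilityMeasure ν] (hνsupp : ν (Set.Icc 0 (C1 - c0)) = 1)
    (hweak : ∀ f : BoundedContinuousFunction ℝ ℝ,
      Tendsto (fun n => ∫ x, f x ∂(Measure.map (Z n) μ)) atTop (nhds (∫ x, f x ∂ν)))
    (F : ℝ → ℝ) (hF : ∀ z, F z = (ν (Set.Icc 0 z)).toReal) :
    ∀ z ∈ Set.Ico (0 : ℝ) (C1 - c0), ContinuousAt F z →
      F z = ∫ x in Set.Icc (0 : ℝ) (C1 - c0), G (c0 + z - x) ∂ν := by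
  rintro z ⟨hz0, hzC⟩ hFz
  have hmoran :
      Measurable (Function.uncurry fun x y : ℝ => min (max (x + y - c0) 0) (C1 - c0)) := by
    fun_prop
  have hZmeas := measurable_of_recursion_s15 hmoran hrec hZ0meas hYmeas
  have (n : ℕ) : IsProbabilityMeasure (μ.map (Y n)) :=
    Measure.isProbabilityMeasure_map (hYmeas n).aemeasurable
  have (n : ℕ) : IsProbabilityMeasure (μ.map (Z n)) :=
    Measure.isProbabilityMeasure_map (hZmeas n).aemeasurable
  have hGY : G = cdf (μ.map (Y 0)) := funext fun y => by
    rw [hG, cdf_eq_real, map_measureReal_apply (hYmeas 0) measurableSet_Iic, measureReal_def]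
    rfl
  have hνout : ν (Icc 0 (C1 - c0))ᶜ = 0 := (prob_compl_eq_zero_iff measurableSet_Icc).2 hνsupp
  have hν0 : ν (Iio 0) = 0 :=
    measure_mono_null (fun y (hy : y < 0) hmem => not_le.2 hy (mem_Icc.1 hmem).1) hνout
  have hFν : F = cdf ν := funext fun x => by rw [hF, cdf_eq_measureReal_Icc hν0, measureReal_def]
  let P (n : ℕ) : ProbabilityMeasure ℝ := ⟨μ.map (Z n), inferInstance⟩
  have hP : Tendsto P atTop (𝓝 ⟨ν, inferInstance⟩) :=
    ProbabilityMeasure.tendsto_iff_forall_integral_tendsto.2 hweak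
  have hstep (n : ℕ) :
      cdf (μ.map (Z (n + 1))) z = ∫ x, cdf (μ.map (Y 0)) (c0 + z - x) ∂(μ.map (Z n)) := by
    rw [cdf_eq_real, ← hYid n, ← (indepFun_of_recursion_s15 hmoran hrec hZ0meas hYmeas hIndep n
      ).measureReal_min_max_le_eq_integral_cdf (hZmeas n) (hYmeas n) hz0 hzC]
    simp_rw [← hrec]
    exact map_measureReal_apply (hZmeas _) measurableSet_Iic
  rw [Measure.restrict_eq_self_of_ae_mem (s := Icc 0 (C1 - c0)) (mem_ae_iff.2 hνout), hFν, hGY]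
  have hlim := (tendsto_cdf_of_tendsto hP (hFν ▸ hFz)).comp (tendsto_add_atTop_nat 1)
  exact tendsto_nhds_unique (hlim.congr hstep)
    (tendsto_integral_cdf_sub_of_tendsto (hGY ▸ hGcont) hP (c0 + z))

/-- fixed-point equation for the limiting storage distribution of the
continuous-state Moran model: if `G` is continuous and the laws of `Z_n` converge weakly to
a probability measure `ν` on `[0, C₁ − c₀]` with cdf `F`, then at every continuity point
`z` of `F` in `[0, C₁ − c₀)` one has `F(z) = ∫_{[0, C₁−c₀]} G(c₀ + z − x) dν(x)`. -/
theorem stmt15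
    (c0 C1 : ℝ) (hc0 : 0 < c0) (hcC : c0 < C1)
    {Ω : Type} [MeasurableSpace Ω] (μ : Measure Ω) [IsProbabilityMeasure μ]
    (Y Z : ℕ → Ω → ℝ)
    (hYmeas : ∀ n, Measurable (Y n)) (hZ0meas : Measurable (Z 0))
    (hYnn : ∀ n ω, 0 ≤ Y n ω)
    (hYid : ∀ n, Measure.map (Y n) μ = Measure.map (Y 0) μ)
    (G : ℝ → ℝ) (hG : ∀ y, G y = (μ {ω | Y 0 ω ≤ y}).toReal)
    (hIndep : iIndepFun
      (fun i : Option ℕ => i.elim (Z 0) Y) μ)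
    (hZ0mem : ∀ ω, Z 0 ω ∈ Set.Icc 0 (C1 - c0))
    (hrec : ∀ n ω, Z (n + 1) ω = min (max (Z n ω + Y n ω - c0) 0) (C1 - c0))
    (hGcont : Continuous G)
    (ν : Measure ℝ) [IsProbabilityMeasure ν] (hνsupp : ν (Set.Icc 0 (C1 - c0)) = 1)
    (hweak : ∀ f : BoundedContinuousFunction ℝ ℝ,
      Tendsto (fun n => ∫ x, f x ∂(Measure.map (Z n) μ)) atTop (nhds (∫ x, f x ∂ν)))
    (F : ℝ → ℝ) (hF : ∀ z, F z = (ν (Set.Icc 0 z)).toReal) :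
    ∀ z ∈ Set.Ico (0 : ℝ) (C1 - c0), ContinuousAt F z →
      F z = ∫ x in Set.Icc (0 : ℝ) (C1 - c0), G (c0 + z - x) ∂ν :=
  stmt15_general c0 C1 μ Y Z hYmeas hZ0meas hYid G hG hIndep hrec hGcont ν hνsupp hweak F hF
end

section
/- (Doeblin condition for the continuous-state Moran kernel.) Assume ℙ(Y_0 = 0) > 0. Let κ be the Markov kernel on [0, C_1 − c_0] defined by κ(z, A) = ℙ(min(max(z + Y_0 − c_0, 0), C_1 − c_0) ∈ A) for Borel sets A ⊆ [0, C_1 − c_0], and let k be the smallest positive integer with k·c_0 ≥ C_1 − c_0. Then for every z ∈ [0, C_1 − c_0] and every Borel set A ⊆ [0, C_1 − c_0], the (k+1)-step kernel satisfies κ^{k+1}(z, A) ≥ (ℙ(Y_0 = 0))^k · κ(0, A). In particular, κ satisfies the Doeblin condition with n_0 = k+1, δ = ℙ(Y_0 = 0)^k, and minorizing probability measure ν = κ(0, ·). -/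
/-!
With probability at least `p = ℙ(Y₀ = 0)` a step of the chain is the deterministic drift
`g z = max (z - c₀) 0`, so `κ^m(z, ·) ≥ p^m δ_{g^m z}`. Since `k c₀ ≥ C₁ - c₀`,
`k` drift steps bring every starting level down to `0`, and one more step of `κ` gives
`κ^{k+1}(z, ·) ≥ p^k κ(0, ·)`.
-/

open scoped BigOperators
open MeasureTheory ProbabilityTheory Filter

/-- `m`-fold composition of a transition kernel `κ` on `ℝ`, started at `z`:
`iterKernel κ 0 z = δ_z` and `iterKernel κ (m+1) z = (iterKernel κ m z).bind κ`. -/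
noncomputable def iterKernel (κ : ℝ → Measure ℝ) : ℕ → ℝ → Measure ℝ
  | 0 => fun z => Measure.dirac z
  | m + 1 => fun z => (iterKernel κ m z).bind κ

open scoped ENNReal

namespace MeasureTheory.Measure

variable {α β γ : Type*} [MeasurableSpace α] [MeasurableSpace β] [MeasurableSpace γ]

theorem bind_mono_left {m m' : Measure α} {f : α → Measure β} (hf : Measurable f) (h : m ≤ m') :
    m.bind f ≤ m'.bind f :=
  le_iff.2 fun _ hs => by
    rw [bind_apply hs hf.aemeasurable, bind_apply hs hf.aemeasurable]
    exact lintegral_mono' h le_rfl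

theorem smul_dirac_bind {f : α → Measure β} (hf : Measurable f) (c : ℝ≥0∞) (a : α) :
    (c • dirac a).bind f = c • f a := by
  rw [bind_smul, dirac_bind hf]

theorem measurable_map_of_measurable_uncurry {f : α → β → γ} (hf : Measurable (Function.uncurry f))
    (μ : Measure β) [SFinite μ] : Measurable fun a => μ.map (f a) := by
  have hcomp : (fun a => μ.map (f a)) = fun a => (μ.map (Prod.mk a)).map (Function.uncurry f) := by
    funext a
    rw [map_map hf measurable_prodMk_left]
    rfl
  rw [hcomp]
  exact (measurable_map _ hf).comp Measurable.map_prodMk_left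

theorem measure_singleton_smul_dirac_le (μ : Measure α) (a : α) : μ {a} • dirac a ≤ μ := by
  rw [← restrict_singleton]
  exact restrict_le_self

theorem measure_eq_smul_dirac_le_map_comp {δ : Type*} [MeasurableSpace δ] (μ : Measure δ)
    {Y : δ → α} {f : α → β} (hY : Measurable Y) (hf : Measurable f) (a : α) :
    μ {ω | Y ω = a} • dirac (f a) ≤ μ.map (fun ω => f (Y ω)) := by
  refine le_trans ?_ (measure_singleton_smul_dirac_le _ (f a))
  gcongr
  refine le_trans (measure_mono fun ω (hω : Y ω = a) => ?_) (le_map_apply (hf.comp hY).aemeasurable _)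
  simp [hω]

end MeasureTheory.Measure

section IterKernel

variable {κ : ℝ → Measure ℝ} {g : ℝ → ℝ} {p : ℝ≥0∞}

theorem pow_smul_dirac_iterate_le_iterKernel (hκ : Measurable κ)
    (hstep : ∀ z, p • Measure.dirac (g z) ≤ κ z) (m : ℕ) (z : ℝ) :
    p ^ m • Measure.dirac (g^[m] z) ≤ iterKernel κ m z := by
  induction m with
  | zero => simp [iterKernel]
  | succ m ih =>
    calc p ^ (m + 1) • Measure.dirac (g^[m + 1] z)
        = p ^ m • p • Measure.dirac (g (g^[m] z)) := by
          rw [Function.iterate_succ_apply', pow_succ, mul_smul]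
      _ ≤ p ^ m • κ (g^[m] z) := by gcongr; exact hstep _
      _ = (p ^ m • Measure.dirac (g^[m] z)).bind κ := (Measure.smul_dirac_bind hκ _ _).symm
      _ ≤ iterKernel κ (m + 1) z := Measure.bind_mono_left hκ ih

theorem pow_smul_le_iterKernel_succ (hκ : Measurable κ)
    (hstep : ∀ z, p • Measure.dirac (g z) ≤ κ z) (m : ℕ) (z : ℝ) :
    p ^ m • κ (g^[m] z) ≤ iterKernel κ (m + 1) z := by
  rw [← Measure.smul_dirac_bind hκ]
  exact Measure.bind_mono_left hκ (pow_smul_dirac_iterate_le_iterKernel hκ hstep m z)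

end IterKernel

section Moran

variable {c0 C1 : ℝ}

def moranUpdate (c0 C1 z y : ℝ) : ℝ := min (max (z + y - c0) 0) (C1 - c0)

theorem measurable_moranUpdate : Measurable (Function.uncurry (moranUpdate c0 C1)) := by
  unfold moranUpdate Function.uncurry
  fun_prop

theorem moranUpdate_zero_of_mem_Icc (hc0 : 0 ≤ c0) {z : ℝ} (hz : z ∈ Set.Icc 0 (C1 - c0)) :
    moranUpdate c0 C1 z 0 = max (z - c0) 0 := by
  rw [moranUpdate, add_zero]
  exact min_eq_left (max_le (by linarith [hz.2]) (hz.1.trans hz.2))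

theorem moranUpdate_zero_iterate (hc0 : 0 ≤ c0) {z : ℝ} (hz : z ∈ Set.Icc 0 (C1 - c0)) (m : ℕ) :
    (moranUpdate c0 C1 · 0)^[m] z = max (z - m * c0) 0 := by
  induction m with
  | zero => simp [hz.1]
  | succ m ih =>
    have hmem : max (z - m * c0) 0 ∈ Set.Icc 0 (C1 - c0) :=
      ⟨le_max_right _ _, max_le (by nlinarith [hz.2]) (hz.1.trans hz.2)⟩
    rw [Function.iterate_succ_apply', ih, moranUpdate_zero_of_mem_Icc hc0 hmem, Nat.cast_succ,
      ← max_sub_sub_right, max_assoc, max_eq_right (by linarith : 0 - c0 ≤ 0)]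
    ring_nf

end Moran

theorem stmt16_general (c0 C1 : ℝ) (hc0 : 0 < c0)
    {Ω : Type} [MeasurableSpace Ω] (μ : Measure Ω) [IsProbabilityMeasure μ]
    (Y0 : Ω → ℝ) (hY0meas : Measurable Y0)
    (κ : ℝ → Measure ℝ)
    (hκ : ∀ z, κ z = Measure.map (fun ω => min (max (z + Y0 ω - c0) 0) (C1 - c0)) μ)
    (k : ℕ) (hk2 : C1 - c0 ≤ k * c0) :
    (∀ z ∈ Set.Icc (0 : ℝ) (C1 - c0), ∀ A : Set ℝ, MeasurableSet A →
      A ⊆ Set.Icc (0 : ℝ) (C1 - c0) →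
        (μ {ω | Y0 ω = 0}) ^ k * κ 0 A ≤ iterKernel κ (k + 1) z A) ∧
    IsProbabilityMeasure (κ 0) := by
  have hκ' : κ = fun z => μ.map (fun ω => moranUpdate c0 C1 z (Y0 ω)) := funext hκ
  have hupdate : Measurable fun q : ℝ × Ω => moranUpdate c0 C1 q.1 (Y0 q.2) :=
    measurable_moranUpdate.comp (measurable_fst.prodMk (hY0meas.comp measurable_snd))
  have hκmeas : Measurable κ := hκ' ▸ Measure.measurable_map_of_measurable_uncurry hupdate μ
  have hstep (z : ℝ) : μ {ω | Y0 ω = 0} • Measure.dirac (moranUpdate c0 C1 z 0) ≤ κ z :=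
    hκ z ▸ Measure.measure_eq_smul_dirac_le_map_comp μ hY0meas
      (measurable_moranUpdate.comp measurable_prodMk_left) 0
  refine ⟨fun z hz A _ _ => ?_,
    hκ 0 ▸ Measure.isProbabilityMeasure_map (hupdate.comp measurable_prodMk_left).aemeasurable⟩
  have hdrift : (moranUpdate c0 C1 · 0)^[k] z = 0 := by
    rw [moranUpdate_zero_iterate hc0.le hz]
    exact max_eq_right (by linarith [hz.2])
  have hle := pow_smul_le_iterKernel_succ hκmeas hstep k z
  rw [hdrift] at hle
  exact hle A

/-- Doeblin condition for the continuous-state Moran kernel: if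
`ℙ(Y₀ = 0) > 0` and `k` is the smallest positive integer with `k·c₀ ≥ C₁ − c₀`, then the
`(k+1)`-step kernel satisfies `κ^{k+1}(z, A) ≥ ℙ(Y₀ = 0)^k · κ(0, A)` for every
`z ∈ [0, C₁ − c₀]` and every Borel `A ⊆ [0, C₁ − c₀]`; moreover `κ(0, ·)` is a probability
measure, so `κ` satisfies the Doeblin condition with `n₀ = k+1`, `δ = ℙ(Y₀ = 0)^k` and
minorizing measure `ν = κ(0, ·)`. -/
theorem stmt16 (c0 C1 : ℝ) (hc0 : 0 < c0) (hcC : c0 < C1)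
    {Ω : Type} [MeasurableSpace Ω] (μ : Measure Ω) [IsProbabilityMeasure μ]
    (Y0 : Ω → ℝ) (hY0meas : Measurable Y0) (hY0nn : ∀ ω, 0 ≤ Y0 ω)
    (hatom : 0 < μ {ω | Y0 ω = 0})
    (κ : ℝ → Measure ℝ)
    (hκ : ∀ z, κ z = Measure.map (fun ω => min (max (z + Y0 ω - c0) 0) (C1 - c0)) μ)
    (k : ℕ) (hk1 : 1 ≤ k) (hk2 : C1 - c0 ≤ k * c0)
    (hkmin : ∀ m : ℕ, 1 ≤ m → C1 - c0 ≤ m * c0 → k ≤ m) :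
    (∀ z ∈ Set.Icc (0 : ℝ) (C1 - c0), ∀ A : Set ℝ, MeasurableSet A →
      A ⊆ Set.Icc (0 : ℝ) (C1 - c0) →
        (μ {ω | Y0 ω = 0}) ^ k * κ 0 A ≤ iterKernel κ (k + 1) z A) ∧
    IsProbabilityMeasure (κ 0) :=
  stmt16_general c0 C1 hc0 μ Y0 hY0meas κ hκ k hk2
end
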